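/- arXiv:2601.11009 — 9 statements merged into one kernel-verified Lean document; each statement's English description precedes it below -/
import Mathlib

section
/- Let X be a sober topological space and C a closed subset of X such that the set max C of maximal elements of C (with respect to the specialization order) is infinite. Then the open set lattice O(X) of X is uncountable. -/
open Set

section RelDefs
variable {α : Type*} (r : α → α → Prop)

/-- `D` is a (nonempty) directed subset with respect to the relation `r`. -/
def DirOn (D : Set α) : Prop :=
  D.Nonempty ∧ ∀ a ∈ D, ∀ b ∈ D, ∃ c ∈ D, r a c ∧ r b c

/-- `s` is a least upper bound of `D` with respect to `r`. -/
def IsLubR (D : Set α) (s : α) : Prop :=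
  (∀ d ∈ D, r d s) ∧ ∀ u, (∀ d ∈ D, r d u) → r s u

/-- `x` is way-below `y` with respect to `r`. -/
def WB (x y : α) : Prop :=
  ∀ D : Set α, DirOn r D → ∀ s, IsLubR r D s → r y s → ∃ d ∈ D, r x d

/-- Every directed subset has a least upper bound (dcpo property). -/
def DcpoRel : Prop := ∀ D : Set α, DirOn r D → ∃ s, IsLubR r D s

/-- Continuity: every element is the directed least upper bound of the elements way-below it. -/
def ContinuousRel : Prop :=
  ∀ y, DirOn r {x | WB r x y} ∧ IsLubR r {x | WB r x y} y

/-- Algebraicity: every element is the directed least upper bound of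
the compact elements (`WB r x x`) below it. -/
def AlgebraicRel : Prop :=
  ∀ y, DirOn r {x | WB r x x ∧ r x y} ∧ IsLubR r {x | WB r x x ∧ r x y} y

/-- Upper set generated by `F` with respect to `r`. -/
def UpS (F : Set α) : Set α := {x | ∃ f ∈ F, r f x}

/-- The set `F` is way-below the set `G` with respect to `r`. -/
def SetWB (F G : Set α) : Prop :=
  ∀ D : Set α, DirOn r D → ∀ s, IsLubR r D s → s ∈ UpS r G → ∃ d ∈ D, d ∈ UpS r F

/-- Finite sets way-below `x`. -/
def FinFam (x : α) : Set (Finset α) := {F | SetWB r (F : Set α) {x}}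

/-- Finite sets `F` with `F ≪ F ≪ x`. -/
def FinFamC (x : α) : Set (Finset α) :=
  {F | SetWB r (F : Set α) (F : Set α) ∧ SetWB r (F : Set α) {x}}

/-- Directedness of a family of finite sets in the Smyth preorder
(`F ⊑ G` iff `G ⊆ ↑F`). -/
def SmythDirected (S : Set (Finset α)) : Prop :=
  S.Nonempty ∧ ∀ F ∈ S, ∀ G ∈ S, ∃ H ∈ S,
    (H : Set α) ⊆ UpS r (F : Set α) ∧ (H : Set α) ⊆ UpS r (G : Set α)

/-- Quasicontinuity with respect to `r`. -/
def QuasicontinuousRel : Prop :=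
  ∀ x, SmythDirected r (FinFam r x) ∧
    UpS r {x} = ⋂ F ∈ FinFam r x, UpS r (F : Set α)

/-- Quasialgebraicity with respect to `r`. -/
def QuasialgebraicRel : Prop :=
  ∀ x, SmythDirected r (FinFamC r x) ∧
    UpS r {x} = ⋂ F ∈ FinFamC r x, UpS r (F : Set α)

/-- `U` is Scott open with respect to `r`: an upper set inaccessible by
least upper bounds of directed sets. -/
def IsScottOpenRel (U : Set α) : Prop :=
  (∀ x ∈ U, ∀ y, r x y → y ∈ U) ∧
    ∀ D : Set α, DirOn r D → ∀ s, IsLubR r D s → s ∈ U → ∃ d ∈ D, d ∈ U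

end RelDefs

section Spec
variable {X : Type*} [TopologicalSpace X]

/-- The specialization order: `x ≤ y` iff `x ∈ cl {y}`. -/
def sle (x y : X) : Prop := x ∈ closure ({y} : Set X)

/-- The maximal elements of `C` with respect to the specialization order. -/
def maxSpec (C : Set X) : Set X := {c | c ∈ C ∧ ∀ y ∈ C, sle c y → sle y c}

end Spec

/-- If `X` is sober, `C ⊆ X` is closed, and `max C` is infinite,
then the open set lattice of `X` is uncountable. -/
theorem stmt0 {X : Type*} [TopologicalSpace X] [T0Space X] [QuasiSober X]
    {C : Set X} (hC : IsClosed C) (hmax : (maxSpec C).Infinite) :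
    ¬ {U : Set X | IsOpen U}.Countable := by
  intro hcount
  have maxIncomp : ∀ a ∈ maxSpec C, ∀ b ∈ maxSpec C, sle a b → a = b := by
    intro a ha b hb h
    have h' : sle b a := ha.2 b hb.1 h
    have : Inseparable b a :=
      (specializes_iff_mem_closure.2 h).antisymm (specializes_iff_mem_closure.2 h')
    exact this.eq.symm
  obtain ⟨e⟩ : Nonempty (ℕ ↪ ↥(maxSpec C)) := ⟨hmax.natEmbedding⟩
  set m : ℕ → X := fun k => (e k : X) with hm
  have hmInj : Function.Injective m := fun a b h => e.injective (Subtype.ext h)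
  have hmM : ∀ k, m k ∈ maxSpec C := fun k => (e k).2
  set 𝒰 : Ultrafilter ℕ := Filter.hyperfilter ℕ with h𝒰
  -- the cluster set
  set A : Set X := {q | ∀ U : Set X, IsOpen U → q ∈ U → {k | m k ∈ U} ∈ 𝒰} with hA
  have hAclosed : IsClosed A := by
    rw [← isOpen_compl_iff, isOpen_iff_forall_mem_open]
    intro q hq
    simp only [hA, mem_compl_iff, mem_setOf_eq, not_forall] at hq
    obtain ⟨U, hUopen, hqU, hUsmall⟩ := hq
    exact ⟨U, fun q' hq' hq'A => hUsmall (hq'A U hUopen hq'), hUopen, hqU⟩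
  by_cases hE : {k | m k ∈ A} ∈ 𝒰
  · -- Case E: A is irreducible; sobriety yields a generic point dominating two maximal points
    have hAne : A.Nonempty := by
      obtain ⟨k, hk⟩ := Filter.nonempty_of_mem hE
      exact ⟨m k, hk⟩
    have hpre : IsPreirreducible A := by
      rintro u v hu hv ⟨a, haA, hau⟩ ⟨b, hbA, hbv⟩
      have hu' : {k | m k ∈ u} ∈ 𝒰 := haA u hu hau
      have hv' : {k | m k ∈ v} ∈ 𝒰 := hbA v hv hbv
      obtain ⟨k, hk⟩ := Filter.nonempty_of_mem
        (Filter.inter_mem hE (Filter.inter_mem hu' hv'))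
      exact ⟨m k, hk.1, hk.2.1, hk.2.2⟩
    obtain ⟨p, hp⟩ := QuasiSober.sober ⟨hAne, hpre⟩ hAclosed
    have hpA : p ∈ A := by rw [← hp.def]; exact subset_closure rfl
    have hpC : p ∈ C := by
      by_contra hpc
      have h1 : {k | m k ∈ (Cᶜ : Set X)} ∈ 𝒰 := hpA Cᶜ hC.isOpen_compl hpc
      have he : {k | m k ∈ (Cᶜ : Set X)} = (∅ : Set ℕ) := by
        ext k; simp [(hmM k).1]
      rw [he] at h1
      exact (Filter.empty_notMem (𝒰 : Filter ℕ)) h1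
    obtain ⟨j, hjA⟩ := Filter.nonempty_of_mem hE
    obtain ⟨k, hkA, hkj⟩ : ∃ k, m k ∈ A ∧ k ≠ j := by
      obtain ⟨k, hk⟩ := Filter.nonempty_of_mem
        (Filter.inter_mem hE ((Set.finite_singleton j).compl_mem_hyperfilter))
      exact ⟨k, hk.1, by simpa using hk.2⟩
    have hjp : sle (m j) p := by rw [← hp.def] at hjA; exact hjA
    have hkp : sle (m k) p := by rw [← hp.def] at hkA; exact hkA
    have hpj : sle p (m j) := (hmM j).2 p hpC hjp
    have hkj' : sle (m k) (m j) :=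
      specializes_iff_mem_closure.1
        ((specializes_iff_mem_closure.2 hpj).trans (specializes_iff_mem_closure.2 hkp))
    exact hkj (hmInj (maxIncomp _ (hmM k) _ (hmM j) hkj'))
  · -- Case D: build an infinite strongly discrete family of maximal points
    have hK : {k | m k ∉ A} ∈ 𝒰 := Ultrafilter.compl_mem_iff_notMem.2 hE
    have hW : ∀ k : ℕ, ∃ U : Set X, m k ∉ A →
        (IsOpen U ∧ m k ∈ U ∧ {j | m j ∈ U} ∉ 𝒰) := by
      intro k
      by_cases h : m k ∈ A
      · exact ⟨∅, fun hc => absurd h hc⟩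
      · simp only [hA, mem_setOf_eq, not_forall] at h
        obtain ⟨U, hU1, hU2, hU3⟩ := h
        exact ⟨U, fun _ => ⟨hU1, hU2, hU3⟩⟩
    choose W hWs using hW
    -- recursive construction of indices
    let step : {B : Set ℕ // B ∈ 𝒰 ∧ B ⊆ {k | m k ∉ A}} →
        {B : Set ℕ // B ∈ 𝒰 ∧ B ⊆ {k | m k ∉ A}} := fun B =>
      let nn := (Filter.nonempty_of_mem B.2.1).choose
      ⟨B.1 ∩ ({j | m j ∈ W nn}ᶜ ∩ {nn}ᶜ),
        Filter.inter_mem B.2.1 (Filter.inter_mem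
          (Ultrafilter.compl_mem_iff_notMem.2
            ((hWs nn (B.2.2 (Filter.nonempty_of_mem B.2.1).choose_spec)).2.2))
          ((Set.finite_singleton nn).compl_mem_hyperfilter)),
        fun x hx => B.2.2 hx.1⟩
    let seq : ℕ → {B : Set ℕ // B ∈ 𝒰 ∧ B ⊆ {k | m k ∉ A}} := fun i =>
      step^[i] ⟨{k | m k ∉ A}, hK, subset_rfl⟩
    let n : ℕ → ℕ := fun i => (Filter.nonempty_of_mem (seq i).2.1).choose
    have hmem : ∀ i, n i ∈ (seq i).1 := fun i =>
      (Filter.nonempty_of_mem (seq i).2.1).choose_spec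
    have hsucc : ∀ i, (seq (i+1)).1 = (seq i).1 ∩ ({j | m j ∈ W (n i)}ᶜ ∩ {n i}ᶜ) := by
      intro i
      show (step^[i+1] _).1 = _
      rw [Function.iterate_succ_apply']
    have hstep : ∀ j, (seq (j+1)).1 ⊆ (seq j).1 := by
      intro j
      rw [hsucc j]
      exact fun x hx => hx.1
    have hmono : ∀ i j, i < j → (seq j).1 ⊆ (seq (i+1)).1 := by
      intro i j hij
      induction j with
      | zero => omega
      | succ j ih =>
        rcases Nat.lt_succ_iff_lt_or_eq.1 hij with h | h
        · exact (hstep j).trans (ih h)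
        · rw [h]
    have hlater : ∀ i j, i < j → m (n j) ∉ W (n i) ∧ n j ≠ n i := by
      intro i j hij
      have h1 := hmono i j hij (hmem j)
      rw [hsucc i] at h1
      exact ⟨h1.2.1, by simpa using h1.2.2⟩
    have hnInj : Function.Injective n := by
      intro i j hij
      rcases lt_trichotomy i j with h | h | h
      · exact absurd hij.symm (hlater i j h).2
      · exact h
      · exact absurd hij (hlater j i h).2
    have hnK : ∀ i, m (n i) ∉ A := fun i => (seq i).2.2 (hmem i)
    -- the discrete open family
    set V : ℕ → Set X := fun i =>
      W (n i) \ ⋃ i' ∈ Finset.range i, closure {m (n i')} with hV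
    have hVopen : ∀ i, IsOpen (V i) :=
      fun i => IsOpen.sdiff (hWs (n i) (hnK i)).1
        (Set.Finite.isClosed_biUnion (Finset.range i).finite_toSet
          (fun _ _ => isClosed_closure))
    have hVmem : ∀ i, m (n i) ∈ V i := by
      intro i
      refine ⟨(hWs (n i) (hnK i)).2.1, ?_⟩
      simp only [mem_iUnion, not_exists]
      intro i' hi' hcl
      have h1 : n i = n i' := hmInj (maxIncomp _ (hmM _) _ (hmM _) hcl)
      have h2 : i = i' := hnInj h1
      simp only [Finset.mem_range] at hi'
      omega
    have hVother : ∀ i j, m (n j) ∈ V i → j = i := by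
      intro i j hj
      by_contra hne
      rcases lt_or_gt_of_ne hne with h | h
      · -- j < i : m (n j) is in the removed closure part
        exact hj.2 (Set.mem_biUnion (Finset.mem_range.2 h) (subset_closure rfl))
      · exact (hlater i j h).1 hj.1
    -- the injection from Set ℕ into open sets
    set Φ : Set ℕ → Set X := fun S => ⋃ i ∈ S, V i with hΦ
    have hΦopen : ∀ S, IsOpen (Φ S) := fun S => isOpen_biUnion (fun i _ => hVopen i)
    have hΦinj : Function.Injective Φ := by
      intro S T hST
      have key : ∀ (S : Set ℕ) (i : ℕ), i ∈ S ↔ m (n i) ∈ Φ S := by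
        intro S i
        constructor
        · intro hi
          exact Set.mem_biUnion hi (hVmem i)
        · intro hi
          obtain ⟨j, hjS, hj⟩ := Set.mem_iUnion₂.1 hi
          rcases hVother j i hj with rfl
          exact hjS
      ext i
      rw [key S i, key T i, hST]
    have hcnt : Countable ↥{U : Set X | IsOpen U} := Set.countable_coe_iff.2 hcount
    have hcnt2 : Countable (Set ℕ) := by
      have hg : Function.Injective
          (fun S : Set ℕ => (⟨Φ S, hΦopen S⟩ : ↥{U : Set X | IsOpen U})) := by
        intro S T h
        exact hΦinj (congrArg Subtype.val h)
      exact hg.countable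
    obtain ⟨f, hf⟩ := (countable_iff_exists_injective (Set ℕ)).1 hcnt2
    exact Function.cantor_injective f hf
end

section
/- Let X be a sober topological space whose open set lattice O(X) is countable. Then every nonempty closed subset C of X has only finitely many maximal elements with respect to the specialization order. -/
open Set

section AuxSeq

open Classical in
/-- Auxiliary splitting sequence: at each step keep the infinite half. -/
noncomputable def Tseq (P : ℕ → ℕ → Prop) : ℕ → Set ℕ
  | 0 => Set.univ
  | n+1 =>
    if ({k ∈ Tseq P n | P n k}).Infinite then {k ∈ Tseq P n | P n k}
    else {k ∈ Tseq P n | ¬ P n k}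

lemma Tseq_infinite (P : ℕ → ℕ → Prop) : ∀ n, (Tseq P n).Infinite := by
  intro n
  induction n with
  | zero => exact Set.infinite_univ
  | succ n ih =>
    rw [Tseq]
    split_ifs with h
    · exact h
    · have hfin : ({k ∈ Tseq P n | P n k}).Finite := Set.not_infinite.mp h
      by_contra h2
      have h2f : ({k ∈ Tseq P n | ¬ P n k}).Finite := Set.not_infinite.mp h2
      have hsub : Tseq P n ⊆ {k ∈ Tseq P n | P n k} ∪ {k ∈ Tseq P n | ¬ P n k} := by
        intro k hk
        by_cases hp : P n k
        · exact Or.inl ⟨hk, hp⟩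
        · exact Or.inr ⟨hk, hp⟩
      exact ih ((hfin.union h2f).subset hsub)

lemma Tseq_succ_subset (P : ℕ → ℕ → Prop) (n : ℕ) : Tseq P (n+1) ⊆ Tseq P n := by
  rw [Tseq]
  split_ifs with h
  · exact Set.sep_subset _ _
  · exact Set.sep_subset _ _

lemma Tseq_anti (P : ℕ → ℕ → Prop) : Antitone (Tseq P) :=
  antitone_nat_of_succ_le (Tseq_succ_subset P)

lemma Tseq_dichotomy (P : ℕ → ℕ → Prop) (n : ℕ) :
    (∀ k ∈ Tseq P (n+1), P n k) ∨ (∀ k ∈ Tseq P (n+1), ¬ P n k) := by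
  rw [Tseq]
  split_ifs with h
  · exact Or.inl fun k hk => hk.2
  · exact Or.inr fun k hk => hk.2

end AuxSeq

/-- If `X` is sober and its open set lattice is countable, then
every nonempty closed subset has finitely many maximal elements. -/
theorem stmt1 {X : Type*} [TopologicalSpace X] [T0Space X] [QuasiSober X]
    (hcnt : {U : Set X | IsOpen U}.Countable) :
    ∀ C : Set X, IsClosed C → C.Nonempty → (maxSpec C).Finite := by
  intro C hC _hCne
  rw [← Set.not_infinite]
  intro hM
  set M := maxSpec C with hMdef
  have hMsub : M ⊆ C := fun c hc => hc.1
  have hmax : ∀ a ∈ M, ∀ b ∈ C, a ∈ closure {b} → b ∈ closure {a} :=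
    fun a ha b hb h => ha.2 b hb h
  have hanti : ∀ a b : X, a ∈ closure {b} → b ∈ closure {a} → a = b := by
    intro a b h1 h2
    have s1 : b ⤳ a := specializes_iff_mem_closure.mpr h1
    have s2 : a ⤳ b := specializes_iff_mem_closure.mpr h2
    exact (s2.antisymm s1).eq
  -- distinct maximal points are T1-separated
  have hT1 : ∀ a ∈ M, ∀ b ∈ M, a ≠ b → a ∉ closure {b} := by
    intro a ha b hb hne h
    exact hne (hanti a b h (hmax a ha b (hMsub hb) h))
  -- no infinite subset of M is preirreducible
  have hB : ∀ S : Set X, S ⊆ M → S.Infinite → ¬ IsPreirreducible S := by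
    intro S hSM hSinf hpre
    have hirr : IsIrreducible S := ⟨hSinf.nonempty, hpre⟩
    obtain ⟨g, hg⟩ := QuasiSober.sober hirr.closure isClosed_closure
    have hgmem : g ∈ closure S := by
      have : g ∈ closure ({g} : Set X) := subset_closure rfl
      rwa [hg] at this
    have hgC : g ∈ C := closure_minimal (hSM.trans hMsub) hC hgmem
    have hone : ∀ z ∈ S, z = g := by
      intro z hz
      have hzg : z ∈ closure ({g} : Set X) := by
        rw [hg]; exact subset_closure hz
      exact hanti z g hzg (hmax z (hSM hz) g hgC hzg)
    exact hSinf ((Set.finite_singleton g).subset (fun z hz => hone z hz))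
  -- enumerate the open sets
  obtain ⟨e, he⟩ := hcnt.exists_eq_range ⟨∅, isOpen_empty⟩
  have heo : ∀ i, IsOpen (e i) := by
    intro i
    have : e i ∈ Set.range e := Set.mem_range_self i
    rw [← he] at this
    exact this
  have hes : ∀ U : Set X, IsOpen U → ∃ i, e i = U := by
    intro U hU
    have : U ∈ Set.range e := by rw [← he]; exact hU
    obtain ⟨i, hi⟩ := this
    exact ⟨i, hi⟩
  -- an injective sequence in M
  let xe := Set.Infinite.natEmbedding M hM
  set x : ℕ → X := fun n => (xe n : X) with hxdef
  have hxM : ∀ n, x n ∈ M := fun n => (xe n).2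
  have hxinj : Function.Injective x := fun a b h => xe.injective (Subtype.ext h)
  -- the splitting sequence
  set P : ℕ → ℕ → Prop := fun i k => x k ∈ e i with hPdef
  have hTinf := Tseq_infinite P
  have hknon : ∀ n, ((Tseq P n) \ Set.Iio n).Nonempty :=
    fun n => ((hTinf n).diff (Set.finite_Iio n)).nonempty
  set kf : ℕ → ℕ := fun n => (hknon n).some with hkfdef
  have hkT : ∀ n, kf n ∈ Tseq P n := fun n => (hknon n).some_mem.1
  have hkge : ∀ n, n ≤ kf n := by
    intro n
    have := (hknon n).some_mem.2
    simpa [Set.mem_Iio, not_lt] using this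
  set y : ℕ → X := fun n => x (kf n) with hydef
  have hyM : ∀ n, y n ∈ M := fun n => hxM _
  -- dichotomy: each open eventually contains or eventually avoids y
  have hdich : ∀ i, (∀ n, i < n → y n ∈ e i) ∨ (∀ n, i < n → y n ∉ e i) := by
    intro i
    rcases Tseq_dichotomy P i with h | h
    · exact Or.inl fun n hn => h (kf n) (Tseq_anti P hn (hkT n))
    · exact Or.inr fun n hn => h (kf n) (Tseq_anti P hn (hkT n))
  -- fibers of y are finite
  have hyfib : ∀ v : X, {n | y n = v}.Finite := by
    intro v
    by_cases hv : ∃ c, x c = v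
    · obtain ⟨c, rfl⟩ := hv
      apply (Set.finite_Iic c).subset
      intro n hn
      have hkc : kf n = c := hxinj hn
      have := hkge n
      rw [hkc] at this
      exact this
    · have hsub : {n | y n = v} ⊆ (∅ : Set ℕ) := fun n hn => absurd ⟨kf n, hn⟩ hv
      exact Set.finite_empty.subset hsub
  -- images of infinite index sets are infinite
  have himg : ∀ J : Set ℕ, J.Infinite → (y '' J).Infinite := by
    intro J hJ hfinImg
    have hsub : J ⊆ ⋃ v ∈ y '' J, {n | y n = v} := by
      intro n hn
      exact Set.mem_biUnion (Set.mem_image_of_mem y hn) rfl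
    exact hJ ((hfinImg.biUnion (fun v _ => hyfib v)).subset hsub)
  -- the key extraction: finite-trace opens meeting any infinite index set
  have hE : ∀ J : Set ℕ, J.Infinite →
      ∃ (U : Set X) (j : ℕ), IsOpen U ∧ j ∈ J ∧ y j ∈ U ∧ {m | y m ∈ U}.Finite := by
    intro J hJ
    have h1 : ¬ IsPreirreducible (y '' J) := by
      apply hB
      · rintro _ ⟨n, _, rfl⟩; exact hyM n
      · exact himg J hJ
    rw [IsPreirreducible] at h1
    push_neg at h1
    obtain ⟨U, V, hU, hV, hUne, hVne, hUV⟩ := h1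
    obtain ⟨i, hiU⟩ := hes U hU
    obtain ⟨i', hiV⟩ := hes V hV
    rcases hdich i with hti | hti
    · rcases hdich i' with hti' | hti'
      · -- both tails in : contradiction
        exfalso
        have hbig : ∃ n ∈ J, max i i' < n := by
          by_contra hcon
          push_neg at hcon
          exact hJ ((Set.finite_Iic (max i i')).subset (fun n hn => hcon n hn))
        obtain ⟨n, hnJ, hn⟩ := hbig
        have h1 : y n ∈ U := by
          rw [← hiU]; exact hti n (lt_of_le_of_lt (le_max_left _ _) hn)
        have h2 : y n ∈ V := by
          rw [← hiV]; exact hti' n (lt_of_le_of_lt (le_max_right _ _) hn)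
        have hmem : y n ∈ y '' J ∩ (U ∩ V) := ⟨Set.mem_image_of_mem y hnJ, h1, h2⟩
        rw [hUV] at hmem
        exact hmem
      · -- V has finite trace
        obtain ⟨z, hz, hzV⟩ := hVne
        obtain ⟨n, hnJ, rfl⟩ := hz
        refine ⟨V, n, hV, hnJ, hzV, (Set.finite_Iic i').subset ?_⟩
        intro m hm
        by_contra hmi
        simp only [Set.mem_Iic, not_le] at hmi
        rw [← hiV] at hm
        exact hti' m hmi hm
    · -- U has finite trace
      obtain ⟨z, hz, hzU⟩ := hUne
      obtain ⟨n, hnJ, rfl⟩ := hz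
      refine ⟨U, n, hU, hnJ, hzU, (Set.finite_Iic i).subset ?_⟩
      intro m hm
      by_contra hmi
      simp only [Set.mem_Iic, not_le] at hmi
      rw [← hiU] at hm
      exact hti m hmi hm
  choose Uf jf hUopen hjmem hjU htr using hE
  -- greedy recursion accumulating finite traces
  set St : ℕ → {s : Set ℕ // s.Finite} := fun n =>
    Nat.rec ⟨∅, Set.finite_empty⟩
      (fun _ p => ⟨p.1 ∪ {m | y m ∈ Uf (p.1)ᶜ (p.2.infinite_compl)},
        p.2.union (htr _ _)⟩) n with hStdef
  set UU : ℕ → Set X := fun k => Uf ((St k).1)ᶜ ((St k).2.infinite_compl) with hUUdef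
  set jj : ℕ → ℕ := fun k => jf ((St k).1)ᶜ ((St k).2.infinite_compl) with hjjdef
  have hSucc : ∀ k, (St (k+1)).1 = (St k).1 ∪ {m | y m ∈ UU k} := fun k => rfl
  have hStMono : ∀ {k l : ℕ}, k ≤ l → (St k).1 ⊆ (St l).1 := by
    intro k l h
    induction l with
    | zero =>
      have hk0 : k = 0 := Nat.le_zero.mp h
      rw [hk0]
    | succ l ih =>
      rcases Nat.eq_or_lt_of_le h with heq | hlt
      · rw [heq]
      · have hk : k ≤ l := Nat.lt_succ_iff.mp hlt
        refine (ih hk).trans ?_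
        rw [hSucc l]
        exact Set.subset_union_left
  have hjnot : ∀ k, jj k ∉ (St k).1 :=
    fun k => (Set.mem_compl_iff _ _).mp (hjmem ((St k).1)ᶜ ((St k).2.infinite_compl))
  have hjU' : ∀ k, y (jj k) ∈ UU k := fun k => hjU _ _
  have htrSt : ∀ k, {m | y m ∈ UU k} ⊆ (St (k+1)).1 := by
    intro k
    rw [hSucc k]
    exact Set.subset_union_right
  have hdistinct : ∀ k l, k < l → y (jj l) ∉ UU k := by
    intro k l hkl h
    exact hjnot l (hStMono hkl (htrSt k h))
  have hvaldist : ∀ k l, k < l → y (jj k) ≠ y (jj l) := by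
    intro k l hkl heq
    exact hdistinct k l hkl (heq ▸ hjU' k)
  -- the diagonal family of opens
  set GG : ℕ → Set X := fun k => UU k ∩ ⋂ m ∈ Set.Iio k, (closure {y (jj m)})ᶜ with hGGdef
  have hGopen : ∀ k, IsOpen (GG k) :=
    fun k => (hUopen _ _).inter
      ((Set.finite_Iio k).isOpen_biInter (fun m _ => isClosed_closure.isOpen_compl))
  have hGself : ∀ k, y (jj k) ∈ GG k := by
    intro k
    refine ⟨hjU' k, ?_⟩
    rw [Set.mem_iInter₂]
    intro m hm
    exact hT1 _ (hyM _) _ (hyM _) (hvaldist m k hm).symm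
  have hGdiag : ∀ k l, y (jj k) ∈ GG l → k = l := by
    intro k l h
    rcases lt_trichotomy k l with hkl | heq | hlk
    · exfalso
      have h2 := h.2
      rw [Set.mem_iInter₂] at h2
      exact h2 k hkl (subset_closure rfl)
    · exact heq
    · exact absurd h.1 (hdistinct l k hlk)
  -- injection from Set ℕ into the open sets
  set W : Set ℕ → Set X := fun A => ⋃ k ∈ A, GG k with hWdef
  have hWopen : ∀ A, IsOpen (W A) := fun A => isOpen_biUnion (fun k _ => hGopen k)
  have key : ∀ A B : Set ℕ, W A = W B → ∀ k, k ∈ A → k ∈ B := by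
    intro A B hW k hk
    have hmem : y (jj k) ∈ W B := by
      rw [← hW]
      exact Set.mem_biUnion hk (hGself k)
    obtain ⟨l, hlB, hl⟩ := Set.mem_iUnion₂.mp hmem
    have := hGdiag k l hl
    rw [this]
    exact hlB
  have hWinj : Function.Injective W := by
    intro A B hAB
    ext k
    exact ⟨key A B hAB k, key B A hAB.symm k⟩
  have hpre : (W ⁻¹' {U : Set X | IsOpen U}).Countable := hcnt.preimage hWinj
  have huniv : (Set.univ : Set (Set ℕ)).Countable :=
    hpre.mono (fun A _ => hWopen A)
  have hcount : Countable (Set ℕ) := Set.countable_univ_iff.mp huniv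
  obtain ⟨f, hf⟩ := exists_injective_nat (Set ℕ)
  exact Function.cantor_injective f hf
end

section
/- Let X be a sober topological space whose open set lattice is countable. Then every closed subset of X is of the form ↓F = {x : ∃ f ∈ F, x ≤ f} for some finite subset F of X, where ≤ is the specialization order; equivalently, the topology on X is the upper topology of the specialization order. -/
open Set

/-!
Every point of a closed set `C` lies below a maximal point of `C`: by Zorn's lemma, since a chain
in the specialization order is irreducible and the generic point of its closure bounds it.
So it suffices that `C` has only finitely many maximal points. They form a T1 subspace with
countably many open sets, and such a space is Noetherian: if `U₀ ⊊ U₁ ⊊ ⋯` are open and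
`aₙ ∈ Uₙ₊₁ \ Uₙ`, then `S ↦ closure {aₙ | n ∈ S}` embeds `Set ℕ` into the closed sets.
A Noetherian space is a finite union of irreducible closed sets, and here each of them is a
point, because the generic point of its closure in `X` lies above all of its (maximal) points.
-/

open TopologicalSpace Topology

section CountableTopology
variable {Y : Type*} [TopologicalSpace Y]

theorem Topology.IsInducing.countable_setOf_isOpen {X : Type*} [TopologicalSpace X] {f : Y → X}
    (hf : IsInducing f) (h : {U : Set X | IsOpen U}.Countable) :
    {V : Set Y | IsOpen V}.Countable :=
  (h.image (f ⁻¹' ·)).mono fun _ hV => hf.isOpen_iff.1 hV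

theorem mem_closure_image_iff_of_strictMono [T1Space Y] {U : ℕ → Set Y} (hU : StrictMono U)
    (hUo : ∀ n, IsOpen (U n)) {a : ℕ → Y} (ha : ∀ n, a n ∈ U (n + 1) \ U n) (S : Set ℕ)
    (m : ℕ) : a m ∈ closure (a '' S) ↔ m ∈ S := by
  refine ⟨fun hm => by_contra fun hmS => ?_, fun hm => subset_closure (mem_image_of_mem a hm)⟩
  have hsub : a '' S ⊆ a '' Iio m ∪ (U (m + 1))ᶜ := by
    rintro _ ⟨n, hn, rfl⟩
    rcases lt_or_gt_of_ne (ne_of_mem_of_not_mem hn hmS) with hnm | hmn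
    · exact Or.inl (mem_image_of_mem a hnm)
    · exact Or.inr fun h => (ha n).2 (hU.monotone hmn h)
  have hclosed : IsClosed (a '' Iio m ∪ (U (m + 1))ᶜ) :=
    ((finite_Iio m).image a).isClosed.union (hUo _).isClosed_compl
  rcases closure_minimal hsub hclosed hm with ⟨n, hnm, hn⟩ | hm'
  · exact (ha m).2 (hn ▸ hU.monotone (Nat.succ_le_of_lt hnm) (ha n).1)
  · exact hm' (ha m).1

theorem not_countable_setOf_isOpen_of_strictMono [T1Space Y] {U : ℕ → Set Y} (hU : StrictMono U)
    (hUo : ∀ n, IsOpen (U n)) : ¬{V : Set Y | IsOpen V}.Countable := by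
  intro hcnt
  choose a ha using fun n : ℕ => exists_of_ssubset (hU n.lt_succ_self)
  have hmem := mem_closure_image_iff_of_strictMono hU hUo ha
  have hinj : InjOn (fun S : Set ℕ => (closure (a '' S))ᶜ) univ := fun S _ T _ hST => by
    ext m
    rw [← hmem S, ← hmem T, ← compl_inj_iff.1 hST]
  have hmaps : MapsTo (fun S : Set ℕ => (closure (a '' S))ᶜ) univ {V : Set Y | IsOpen V} :=
    fun _ _ => isClosed_closure.isOpen_compl
  obtain ⟨f, hf⟩ :=
    (countable_univ_iff.1 (hmaps.countable_of_injOn hinj hcnt)).exists_injective_nat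
  exact Function.cantor_injective f hf

theorem noetherianSpace_of_countable_setOf_isOpen [T1Space Y]
    (h : {U : Set Y | IsOpen U}.Countable) : NoetherianSpace Y := by
  rw [NoetherianSpace, WellFoundedGT, isWellFounded_iff, RelEmbedding.wellFounded_iff_isEmpty]
  exact ⟨fun f => not_countable_setOf_isOpen_of_strictMono (U := fun n => (f n : Set Y))
    (fun _ _ hnm => f.map_rel_iff.2 hnm) (fun n => (f n).isOpen) h⟩

end CountableTopology

section Specialization
variable {X : Type*} [TopologicalSpace X]

theorem sle_iff_specializes {x y : X} : sle x y ↔ y ⤳ x := specializes_iff_mem_closure.symm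

theorem isClosed_setOf_exists_sle (F : Finset X) : IsClosed {x | ∃ f ∈ F, sle x f} := by
  have : {x | ∃ f ∈ F, sle x f} = ⋃ f ∈ F, closure {f} := by ext; simp [sle]
  exact this ▸ isClosed_biUnion_finset fun _ _ => isClosed_closure

theorem IsChain.isPreirreducible_of_specializes {s : Set X} (hs : IsChain (· ⤳ ·) s) :
    IsPreirreducible s := by
  rintro u v hu hv ⟨a, has, hau⟩ ⟨b, hbs, hbv⟩
  by_cases hab : a = b
  · exact ⟨a, has, hau, hab ▸ hbv⟩
  rcases hs has hbs hab with h | h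
  · exact ⟨a, has, hau, h.mem_open hv hbv⟩
  · exact ⟨b, hbs, h.mem_open hu hau, hbv⟩

theorem exists_mem_maxSpec_sle [QuasiSober X] {C : Set X} (hC : IsClosed C) {x : X}
    (hx : x ∈ C) : ∃ m ∈ maxSpec C, sle x m := by
  -- `x ≤ y` means `y ⤳ x`, that is `sle x y`
  let _ : Preorder X := specializationPreorder X
  obtain ⟨m, hxm, hmC, hmax⟩ := zorn_le_nonempty₀ C (fun c hcC hc y hy => by
    have hgen := IsIrreducible.isGenericPoint_genericPoint_closure
      ⟨⟨y, hy⟩, hc.symm.isPreirreducible_of_specializes⟩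
    exact ⟨_, closure_minimal hcC hC hgen.mem,
      fun z hz => hgen.specializes (subset_closure hz)⟩)
    x hx
  refine ⟨m, ⟨hmC, fun y hy hmy => ?_⟩, sle_iff_specializes.2 hxm⟩
  exact sle_iff_specializes.2 (hmax hy (sle_iff_specializes.1 hmy))

theorem eq_of_mem_maxSpec_of_sle [T0Space X] {C : Set X} {a b : X} (ha : a ∈ maxSpec C)
    (hb : b ∈ maxSpec C) (hab : sle a b) : a = b :=
  (sle_iff_specializes.1 (ha.2 b hb.1 hab)).antisymm (sle_iff_specializes.1 hab) |>.eq

instance [T0Space X] (C : Set X) : T1Space (maxSpec C) :=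
  t1Space_iff_specializes_imp_eq.2 fun a b hab =>
    (Subtype.ext (eq_of_mem_maxSpec_of_sle b.2 a.2
      (sle_iff_specializes.2 ((subtype_specializes_iff a b).1 hab)))).symm

theorem IsPreirreducible.subsingleton_of_subset_maxSpec [T0Space X] [QuasiSober X] {C S : Set X}
    (hC : IsClosed C) (hS : IsPreirreducible S) (hSC : S ⊆ maxSpec C) : S.Subsingleton := by
  intro a ha b hb
  have hgen := IsIrreducible.isGenericPoint_genericPoint_closure ⟨⟨a, ha⟩, hS⟩
  have hgC : _ ∈ C := closure_minimal (hSC.trans fun _ h => h.1) hC hgen.mem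
  have hga : a ⤳ _ := sle_iff_specializes.1 <|
    (hSC ha).2 _ hgC (sle_iff_specializes.2 (hgen.specializes (subset_closure ha)))
  exact (eq_of_mem_maxSpec_of_sle (hSC hb) (hSC ha)
    (sle_iff_specializes.2 (hga.trans (hgen.specializes (subset_closure hb))))).symm

theorem finite_maxSpec [T0Space X] [QuasiSober X] (hcnt : {U : Set X | IsOpen U}.Countable)
    {C : Set X} (hC : IsClosed C) : (maxSpec C).Finite := by
  have := noetherianSpace_of_countable_setOf_isOpen
    (IsInducing.subtypeVal.countable_setOf_isOpen hcnt (f := ((↑) : maxSpec C → X)))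
  obtain ⟨S, hSfin, -, hSirr, hSuniv⟩ :=
    NoetherianSpace.exists_finite_set_isClosed_irreducible (isClosed_univ (X := maxSpec C))
  have hsingle : ∀ t ∈ S, t.Subsingleton := fun t ht =>
    subsingleton_of_image Subtype.val_injective t <|
      ((hSirr t ht).image _ continuous_subtype_val.continuousOn).isPreirreducible
        |>.subsingleton_of_subset_maxSpec hC (by rintro _ ⟨y, -, rfl⟩; exact y.2)
  exact finite_coe_iff.1 <| finite_univ_iff.1 <|
    hSuniv ▸ hSfin.sUnion fun t ht => (hsingle t ht).finite

theorem exists_finset_eq_setOf_exists_sle [T0Space X] [QuasiSober X]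
    (hcnt : {U : Set X | IsOpen U}.Countable) {C : Set X} (hC : IsClosed C) :
    ∃ F : Finset X, C = {x | ∃ f ∈ F, sle x f} := by
  have hfin := finite_maxSpec hcnt hC
  refine ⟨hfin.toFinset, Set.ext fun x => ⟨fun hx => ?_, ?_⟩⟩
  · obtain ⟨m, hm, hxm⟩ := exists_mem_maxSpec_sle hC hx
    exact ⟨m, hfin.mem_toFinset.2 hm, hxm⟩
  · rintro ⟨f, hf, hxf⟩
    exact closure_minimal (singleton_subset_iff.2 (hfin.mem_toFinset.1 hf).1) hC hxf

theorem eq_generateFrom_of_forall_isClosed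
    (h : ∀ C : Set X, IsClosed C → ∃ F : Finset X, C = {x | ∃ f ∈ F, sle x f}) :
    ‹TopologicalSpace X› =
      generateFrom {s : Set X | ∃ F : Finset X, s = {x | ∃ f ∈ F, sle x f}ᶜ} := by
  refine le_antisymm (le_generateFrom ?_) fun U hU => ?_
  · rintro _ ⟨F, rfl⟩
    exact (isClosed_setOf_exists_sle F).isOpen_compl
  · obtain ⟨F, hF⟩ := h Uᶜ hU.isClosed_compl
    exact .basic _ ⟨F, by rw [← hF, compl_compl]⟩

end Specialization

/-- If `X` is sober with countable open set lattice, then every closed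
set is `↓F` for a finite `F`, and the topology is the upper topology of the
specialization order. -/
theorem stmt2 {X : Type*} [TopologicalSpace X] [T0Space X] [QuasiSober X]
    (hcnt : {U : Set X | IsOpen U}.Countable) :
    (∀ C : Set X, IsClosed C → ∃ F : Finset X, C = {x | ∃ f ∈ F, sle x f}) ∧
      ‹TopologicalSpace X› =
        TopologicalSpace.generateFrom
          {s : Set X | ∃ F : Finset X, s = {x | ∃ f ∈ F, sle x f}ᶜ} :=
  have h := fun C (hC : IsClosed C) => exists_finset_eq_setOf_exists_sle hcnt hC
  ⟨h, eq_generateFrom_of_forall_isClosed h⟩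
end

section
/- Let X be a sober T1 topological space whose lattice of open sets is countable. Then X is finite. -/
open Set

open Classical in
/-- Chain of closed sets: remove each open if the remainder stays infinite. -/
private noncomputable def chainC {X : Type*} (f : ℕ → Set X) : ℕ → Set X
  | 0 => Set.univ
  | n+1 => if (chainC f n \ f n).Infinite then chainC f n \ f n else chainC f n

private lemma chainC_succ_subset {X : Type*} (f : ℕ → Set X) (n : ℕ) :
    chainC f (n+1) ⊆ chainC f n := by
  rw [chainC]
  split
  · exact diff_subset
  · exact subset_rfl

private lemma chainC_antitone {X : Type*} (f : ℕ → Set X) : Antitone (chainC f) :=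
  antitone_nat_of_succ_le (chainC_succ_subset f)

private lemma chainC_isClosed {X : Type*} [TopologicalSpace X] (f : ℕ → Set X)
    (hf : ∀ n, IsOpen (f n)) (n : ℕ) : IsClosed (chainC f n) := by
  induction n with
  | zero => exact isClosed_univ
  | succ n ih =>
    rw [chainC]; split
    · exact ih.sdiff (hf n)
    · exact ih

private lemma chainC_infinite {X : Type*} [Infinite X] (f : ℕ → Set X) (n : ℕ) :
    (chainC f n).Infinite := by
  induction n with
  | zero => exact infinite_univ
  | succ n ih =>
    rw [chainC]; split
    · assumption
    · exact ih

/-- uncountability of `Set ℕ` -/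
private theorem notCntSet : ¬ Countable (Set ℕ) := fun _ => by
  have h1 : (Cardinal.mk (Set ℕ)) ≤ Cardinal.aleph0 := Cardinal.mk_le_aleph0
  rw [Cardinal.mk_set, Cardinal.mk_nat] at h1
  exact absurd (h1.trans_lt (by rw [← Cardinal.mk_nat]; exact Cardinal.cantor _))
    (lt_irrefl _)

/-- Key lemma: in a T1 space with countably many opens, there is no
strictly decreasing sequence of closed sets. -/
private theorem no_strict_chain {X : Type*} [TopologicalSpace X] [T1Space X]
    (hcnt : {U : Set X | IsOpen U}.Countable)
    (D : ℕ → Set X) (hcl : ∀ n, IsClosed (D n)) (hss : ∀ n, D (n+1) ⊂ D n) : False := by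
  -- closed sets are countable
  have hccl : {C : Set X | IsClosed C}.Countable := by
    have : {C : Set X | IsClosed C} ⊆ compl '' {U : Set X | IsOpen U} := by
      intro C hC
      exact ⟨Cᶜ, hC.isOpen_compl, compl_compl C⟩
    exact (hcnt.image compl).mono this
  -- pick witnesses
  have hx : ∀ n, ∃ x, x ∈ D n \ D (n+1) := fun n => exists_of_ssubset (hss n)
  choose x hxmem using hx
  have hxD : ∀ n, x n ∈ D n := fun n => (hxmem n).1
  have hxD' : ∀ n, x n ∉ D (n+1) := fun n => (hxmem n).2
  have hanti : Antitone D := antitone_nat_of_succ_le (fun n => (hss n).subset)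
  have hxinj : Function.Injective x := by
    intro i j hij
    by_contra hne
    rcases Nat.lt_or_ge i j with h | h
    · exact hxD' i (hanti (Nat.succ_le_of_lt h) (hij ▸ hxD j))
    · have h' : i > j := lt_of_le_of_ne h (Ne.symm hne)
      exact hxD' j (hanti (Nat.succ_le_of_lt h') (hij ▸ hxD i))
  -- the injection from Set ℕ into closed sets
  set E : Set ℕ → Set X := fun S => ⋂ n ∈ Sᶜ, (D (n+1) ∪ x '' {i | i ∈ S ∧ i ≤ n}) with hE
  have hEcl : ∀ S, IsClosed (E S) := by
    intro S
    apply isClosed_biInter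
    intro n _
    apply IsClosed.union (hcl (n+1))
    apply Set.Finite.isClosed
    apply Set.Finite.image
    exact (Set.finite_Iic n).subset (fun i hi => hi.2)
  have hmem : ∀ S j, x j ∈ E S ↔ j ∈ S := by
    intro S j
    constructor
    · intro h
      by_contra hj
      have := (Set.mem_iInter₂.mp h) j hj
      rcases this with h1 | h2
      · exact hxD' j h1
      · rcases h2 with ⟨i, hi, hxe⟩
        exact hj ((hxinj hxe) ▸ hi.1)
    · intro hj
      apply Set.mem_iInter₂.mpr
      intro n hn
      rcases le_or_gt j n with h | h
      · exact Or.inr ⟨j, ⟨hj, h⟩, rfl⟩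
      · exact Or.inl (hanti h (hxD j))
  have hEinj : Function.Injective E := by
    intro S T hST
    ext j
    rw [← hmem S j, ← hmem T j, hST]
  -- contradiction with countability
  have : Countable {C : Set X | IsClosed C} := hccl.to_subtype
  have : Countable (Set ℕ) := by
    have hinj : Function.Injective (fun S => (⟨E S, hEcl S⟩ : {C : Set X | IsClosed C})) := by
      intro S T h
      exact hEinj (congrArg Subtype.val h)
    exact hinj.countable
  exact notCntSet this

/-- A sober T1 space with countably many open sets is finite. -/
theorem stmt3 {X : Type*} [TopologicalSpace X] [T1Space X] [QuasiSober X]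
    (hcnt : {U : Set X | IsOpen U}.Countable) :
    Finite X := by
  by_contra hfin
  have : Infinite X := not_finite_iff_infinite.mp hfin
  -- enumerate the opens
  obtain ⟨f, hf⟩ := Set.Countable.exists_eq_range hcnt ⟨∅, isOpen_empty⟩
  have hfo : ∀ n, IsOpen (f n) := fun n => by
    have : f n ∈ {U : Set X | IsOpen U} := hf ▸ mem_range_self n
    exact this
  -- the chain stabilizes
  have hstab : ∃ m, ∀ n, m ≤ n → chainC f n = chainC f m := by
    by_contra h
    push_neg at h
    have h' : ∀ m, ∃ n, chainC f n ⊂ chainC f m := by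
      intro m
      obtain ⟨n, hn1, hn2⟩ := h m
      exact ⟨n, ssubset_of_subset_of_ne (chainC_antitone f hn1) hn2⟩
    choose g hg using h'
    exact no_strict_chain hcnt (fun k => chainC f (g^[k] 0))
      (fun k => chainC_isClosed f hfo _)
      (fun k => by
        show chainC f (g^[k+1] 0) ⊂ chainC f (g^[k] 0)
        rw [Function.iterate_succ_apply']; exact hg _)
  obtain ⟨m, hm⟩ := hstab
  set C := chainC f m with hC
  have hCcl : IsClosed C := chainC_isClosed f hfo m
  have hCinf : C.Infinite := chainC_infinite f m
  have hCsub : ∀ n, C ⊆ chainC f n := by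
    intro n
    rcases le_or_gt m n with h | h
    · exact (hm n h).superset
    · exact chainC_antitone f h.le
  -- dichotomy: for each open, C \ W finite or C ∩ W = ∅
  have hdich : ∀ n, (C \ f n).Finite ∨ C ∩ f n = ∅ := by
    intro n
    by_cases h : (chainC f n \ f n).Infinite
    · right
      have h1 : chainC f (n+1) = chainC f n \ f n := by rw [chainC, if_pos h]
      have h2 : C ⊆ chainC f n \ f n := h1 ▸ hCsub (n+1)
      ext z
      simp only [mem_inter_iff, mem_empty_iff_false, iff_false]
      rintro ⟨hz1, hz2⟩
      exact (h2 hz1).2 hz2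
    · left
      rw [Set.not_infinite] at h
      exact h.subset (fun z hz => ⟨hCsub n hz.1, hz.2⟩)
  -- C is irreducible
  have hCirr : IsIrreducible C := by
    constructor
    · exact hCinf.nonempty
    · intro u v hu hv hcu hcv
      obtain ⟨nu, hnu⟩ : u ∈ range f := hf ▸ hu
      obtain ⟨nv, hnv⟩ : v ∈ range f := hf ▸ hv
      have hu' : (C \ u).Finite := by
        rcases hdich nu with h | h
        · rwa [hnu] at h
        · rw [hnu] at h
          exact absurd hcu (by rw [h]; exact not_nonempty_empty)
      have hv' : (C \ v).Finite := by
        rcases hdich nv with h | h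
        · rwa [hnv] at h
        · rw [hnv] at h
          exact absurd hcv (by rw [h]; exact not_nonempty_empty)
      have hsub : C \ (u ∩ v) ⊆ (C \ u) ∪ (C \ v) := by
        intro z hz
        rcases not_and_or.mp hz.2 with h | h
        · exact Or.inl ⟨hz.1, h⟩
        · exact Or.inr ⟨hz.1, h⟩
      have hfin : (C \ (u ∩ v)).Finite := (hu'.union hv').subset hsub
      have hsub2 : C \ (C \ (u ∩ v)) ⊆ C ∩ (u ∩ v) := fun z hz =>
        ⟨hz.1, by_contra fun hc => hz.2 ⟨hz.1, hc⟩⟩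
      exact ((hCinf.diff hfin).mono hsub2).nonempty
  -- soberness: C is a singleton, contradiction
  have := hCirr.closure_genericPoint hCcl
  rw [closure_singleton] at this
  exact hCinf (this ▸ Set.finite_singleton _)
end

section
/- Every countable sober T1 topological space with countably many open sets has a finite open set lattice. -/
/-!
In a sober T1 space the closure of an irreducible set is the closure of a point, i.e. a point,
so an infinite open set is never irreducible. An infinite open set therefore contains a nonempty
open set and a disjoint infinite open set (if neither of the two witnesses of reducibility is
infinite, an isolated point does the job). Iterating this in an infinite space yields pairwise
disjoint nonempty open sets `D 0, D 1, …`, and the unions `⋃ n ∈ S, D n` for `S ⊆ ℕ` are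
uncountably many distinct open sets. So the space is finite, hence so is its topology.
-/

open Set

open Function

section SoberT1

variable {X : Type*} [TopologicalSpace X] [T1Space X] [QuasiSober X]

theorem IsPreirreducible.subsingleton_of_quasiSober {s : Set X} (hs : IsPreirreducible s) :
    s.Subsingleton := by
  rcases s.eq_empty_or_nonempty with rfl | hne
  · exact subsingleton_empty
  have hirr : IsIrreducible s := ⟨hne, hs⟩
  have hcl : closure s = {hirr.genericPoint} := by
    rw [← hirr.genericPoint_closure_eq, closure_singleton]
  exact subsingleton_singleton.anti (hcl ▸ subset_closure)

theorem IsOpen.exists_isOpen_nonempty_infinite_disjoint_subset {W : Set X} (hW : IsOpen W)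
    (hinf : W.Infinite) :
    ∃ U V : Set X, IsOpen U ∧ IsOpen V ∧ U ⊆ W ∧ V ⊆ W ∧ U.Nonempty ∧ V.Infinite ∧
      Disjoint U V := by
  have hW' : ¬ IsPreirreducible W := fun h => hinf h.subsingleton_of_quasiSober.finite
  simp only [IsPreirreducible, not_forall, not_nonempty_iff_eq_empty] at hW'
  obtain ⟨u, v, hu, hv, hWu, hWv, huv⟩ := hW'
  have hdisj : Disjoint (W ∩ u) (W ∩ v) := by
    rw [disjoint_iff_inter_eq_empty, ← huv]
    ext; simp only [mem_inter_iff]; tauto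
  by_cases hWu_inf : (W ∩ u).Infinite
  · exact ⟨W ∩ v, W ∩ u, hW.inter hv, hW.inter hu, inter_subset_left, inter_subset_left,
      hWv, hWu_inf, hdisj.symm⟩
  obtain ⟨x, hx⟩ := hWu
  have hx_open : IsOpen {x} :=
    isOpen_singleton_of_finite_mem_nhds x ((hW.inter hu).mem_nhds hx) (not_infinite.mp hWu_inf)
  exact ⟨{x}, W \ {x}, hx_open, hW.sdiff isClosed_singleton, singleton_subset_iff.mpr hx.1,
    sdiff_subset, singleton_nonempty x, hinf.sdiff (finite_singleton x), disjoint_sdiff_right⟩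

theorem exists_pairwise_disjoint_nonempty_isOpen [Infinite X] :
    ∃ D : ℕ → Set X, (∀ n, IsOpen (D n)) ∧ (∀ n, (D n).Nonempty) ∧ Pairwise (Disjoint on D) := by
  have hsplit (W : {W : Set X // IsOpen W ∧ W.Infinite}) :
      ∃ (U : Set X) (V : {W : Set X // IsOpen W ∧ W.Infinite}),
        IsOpen U ∧ U ⊆ W.1 ∧ V.1 ⊆ W.1 ∧ U.Nonempty ∧ Disjoint U V.1 := by
    obtain ⟨U, V, hU, hV, hUW, hVW, hU_ne, hV_inf, hUV⟩ :=
      W.2.1.exists_isOpen_nonempty_infinite_disjoint_subset W.2.2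
    exact ⟨U, ⟨V, hV, hV_inf⟩, hU, hUW, hVW, hU_ne, hUV⟩
  choose U next hU hUW hnextW hU_ne hUnext using hsplit
  let W : ℕ → {W : Set X // IsOpen W ∧ W.Infinite} :=
    fun n => next^[n] ⟨univ, isOpen_univ, infinite_univ⟩
  have hW_succ (n : ℕ) : W (n + 1) = next (W n) := iterate_succ_apply' _ _ _
  have hW_anti : Antitone fun n => (W n).1 :=
    antitone_nat_of_succ_le fun n => hW_succ n ▸ hnextW (W n)
  have hlt {m n : ℕ} (hmn : m < n) : Disjoint (U (W m)) (U (W n)) :=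
    (hUnext (W m)).mono_right <| (hUW (W n)).trans <| hW_succ m ▸ hW_anti hmn
  refine ⟨fun n => U (W n), fun n => hU _, fun n => hU_ne _, fun m n hmn => ?_⟩
  rcases hmn.lt_or_gt with h | h
  exacts [hlt h, (hlt h).symm]

end SoberT1

theorem not_countable_isOpen_of_pairwise_disjoint {X : Type*} [TopologicalSpace X]
    {D : ℕ → Set X} (hD : ∀ n, IsOpen (D n)) (hD_ne : ∀ n, (D n).Nonempty)
    (hD_disj : Pairwise (Disjoint on D)) : ¬ {U : Set X | IsOpen U}.Countable := by
  intro hcnt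
  have : Countable {U : Set X // IsOpen U} := hcnt.to_subtype
  let Φ : Set ℕ → {U : Set X // IsOpen U} :=
    fun S => ⟨⋃ n ∈ S, D n, isOpen_biUnion fun n _ => hD n⟩
  have hΦ : Injective Φ :=
    fun S T hST => hD_disj.biUnion_injective hD_ne (congrArg Subtype.val hST)
  obtain ⟨g, hg⟩ := exists_injective_nat {U : Set X // IsOpen U}
  exact cantor_injective (g ∘ Φ) (hg.comp hΦ)

theorem stmt4_general {X : Type*} [TopologicalSpace X] [T1Space X] [QuasiSober X]
    (hcnt : {U : Set X | IsOpen U}.Countable) :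
    Finite {U : Set X // IsOpen U} := by
  suffices Finite X from Subtype.finite
  by_contra hfin
  have : Infinite X := not_finite_iff_infinite.mp hfin
  obtain ⟨D, hD, hD_ne, hD_disj⟩ := exists_pairwise_disjoint_nonempty_isOpen (X := X)
  exact not_countable_isOpen_of_pairwise_disjoint hD hD_ne hD_disj hcnt

/-- A countable sober T1 space with countably many open sets has a
finite open set lattice. -/
theorem stmt4 {X : Type*} [TopologicalSpace X] [T1Space X] [QuasiSober X]
    [Countable X] (hcnt : {U : Set X | IsOpen U}.Countable) :
    Finite {U : Set X // IsOpen U} :=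
  stmt4_general hcnt
end

section
/- In a sober space X, every nonempty closed subset has at least one maximal element with respect to the specialization order, and every closed set C satisfies C = ↓(max C). -/
open Set

section Spec
variable {X : Type*} [TopologicalSpace X]

lemma sle_chain_irred {C : Set X} (c : Set X) (hcC : c ⊆ C)
    (hchain : IsChain sle c) (hne : c.Nonempty) : IsIrreducible c := by
  refine ⟨hne, fun U V hU hV ⟨a, hac, haU⟩ ⟨b, hbc, hbV⟩ => ?_⟩
  rcases eq_or_ne a b with rfl | hab
  · exact ⟨a, hac, haU, hbV⟩
  rcases hchain hac hbc hab with h | h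
  · -- sle a b : a ∈ closure {b}; a ∈ U open ⇒ b ∈ U
    have hbU : b ∈ U := by
      have := mem_closure_iff.mp h U hU haU
      rcases this with ⟨z, hzU, hz⟩
      rcases hz with rfl
      exact hzU
    exact ⟨b, hbc, hbU, hbV⟩
  · have haV : a ∈ V := by
      have := mem_closure_iff.mp h V hV hbV
      rcases this with ⟨z, hzV, hz⟩
      rcases hz with rfl
      exact hzV
    exact ⟨a, hac, haU, haV⟩

end Spec

/-- In a sober space, every nonempty closed set has a maximal element
(w.r.t. the specialization order), and every closed set `C` satisfies
`C = ↓(max C)`. -/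
theorem stmt5 {X : Type*} [TopologicalSpace X] [T0Space X] [QuasiSober X] :
    ∀ C : Set X, IsClosed C →
      (C.Nonempty → (maxSpec C).Nonempty) ∧ C = {x | ∃ c ∈ maxSpec C, sle x c} := by
  intro C hC
  letI : Preorder X := specializationPreorder X
  have hle : ∀ x y : X, sle x y ↔ x ≤ y := by
    intro x y
    constructor
    · intro h; exact (specializes_iff_mem_closure.mpr h)
    · intro h; exact specializes_iff_mem_closure.mp h
  -- Zorn: every x ∈ C is below a maximal element of C
  have key : ∀ x ∈ C, ∃ m ∈ maxSpec C, sle x m := by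
    intro x hx
    have ih : ∀ c ⊆ C, IsChain (· ≤ ·) c → ∀ y ∈ c, ∃ ub ∈ C, ∀ z ∈ c, z ≤ ub := by
      intro c hcC hchain y hy
      have hchain' : IsChain sle c := by
        intro a ha b hb hab
        rcases hchain ha hb hab with h | h
        · exact Or.inl ((hle a b).mpr h)
        · exact Or.inr ((hle b a).mpr h)
      have hirr : IsIrreducible c := sle_chain_irred c hcC hchain' ⟨y, hy⟩
      obtain ⟨s, hs⟩ := QuasiSober.sober hirr.closure isClosed_closure
      have hsC : s ∈ C := closure_minimal hcC hC hs.mem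
      refine ⟨s, hsC, fun z hz => ?_⟩
      have hz' : z ∈ closure ({s} : Set X) := by
        rw [hs]; exact subset_closure hz
      exact (hle z s).mp hz'
    obtain ⟨m, hxm, hm⟩ := zorn_le_nonempty₀ C ih x hx
    refine ⟨m, ⟨hm.prop, fun y hy hmy => (hle y m).mpr (hm.le_of_ge hy ((hle m y).mp hmy))⟩,
      (hle x m).mpr hxm⟩
  constructor
  · rintro ⟨x, hx⟩
    obtain ⟨m, hm, -⟩ := key x hx
    exact ⟨m, hm⟩
  · apply Subset.antisymm
    · intro x hx
      exact key x hx
    · rintro x ⟨c, hc, hxc⟩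
      have : x ∈ closure ({c} : Set X) := hxc
      have h1 : closure ({c} : Set X) ⊆ C := closure_minimal (singleton_subset_iff.mpr hc.1) hC
      exact h1 this
end

section
/- Every countable frame is spatial: in a countable frame L, every element is the infimum of the prime elements above it. -/
open Set

section FrameDefs
variable {L : Type*} [Order.Frame L]

/-- A prime element of a frame. -/
def PrimeElt (p : L) : Prop := p ≠ ⊤ ∧ ∀ a b : L, a ⊓ b ≤ p → a ≤ p ∨ b ≤ p

end FrameDefs

/-- The spectrum of a frame: its prime elements. -/
def PtL (L : Type*) [Order.Frame L] : Type _ := {p : L // PrimeElt p}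

/-- The hull-kernel topology on the spectrum. -/
instance ptLTop (L : Type*) [Order.Frame L] : TopologicalSpace (PtL L) :=
  TopologicalSpace.generateFrom {S : Set (PtL L) | ∃ a : L, S = {p | ¬ a ≤ p.1}}


section SpatialProof

variable {L : Type*} [Order.Frame L]

/-- If the interval `[c,h]` admits no splitting of its bottom, then `h ⇨ c` is prime. -/
private lemma himp_prime {a b c h : L}
    (hbc : b ≤ c) (hch : c ≤ h) (hB : ¬ a ⊓ h ≤ c)
    (hno : ∀ x y : L, c < x → x ≤ h → c < y → y ≤ h → x ⊓ y ≠ c) :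
    PrimeElt (h ⇨ c) := by
  constructor
  · intro htop
    have hhc : h ≤ c := by
      have h2 : (⊤ : L) ≤ h ⇨ c := htop.ge
      simpa [le_himp_iff] using h2
    exact hB (inf_le_right.trans hhc)
  · intro u w huw
    have huwh : u ⊓ w ⊓ h ≤ c := le_himp_iff.mp huw
    have h1 : (u ⊓ h) ⊓ (w ⊓ h) ≤ c := by
      refine le_trans ?_ huwh
      exact le_inf (le_inf (inf_le_left.trans inf_le_left)
        (inf_le_right.trans inf_le_left)) (inf_le_left.trans inf_le_right)
    have hXY : (u ⊓ h ⊔ c) ⊓ (w ⊓ h ⊔ c) ≤ c := by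
      rw [inf_sup_right, inf_sup_left]
      exact sup_le (sup_le h1 inf_le_right) inf_le_left
    have hcX : c ≤ u ⊓ h ⊔ c := le_sup_right
    have hcY : c ≤ w ⊓ h ⊔ c := le_sup_right
    have hXYc : (u ⊓ h ⊔ c) ⊓ (w ⊓ h ⊔ c) = c := le_antisymm hXY (le_inf hcX hcY)
    by_cases hu : u ⊓ h ≤ c
    · exact Or.inl (le_himp_iff.mpr hu)
    by_cases hw : w ⊓ h ≤ c
    · exact Or.inr (le_himp_iff.mpr hw)
    exfalso
    have hcX' : c < u ⊓ h ⊔ c := hcX.lt_of_ne (fun e => hu (le_sup_left.trans e.symm.le))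
    have hcY' : c < w ⊓ h ⊔ c := hcY.lt_of_ne (fun e => hw (le_sup_left.trans e.symm.le))
    exact hno _ _ hcX' (sup_le inf_le_right hch) hcY' (sup_le inf_le_right hch) hXYc

private lemma split_lemma {a b c h : L}
    (H : ∀ p : L, PrimeElt p → b ≤ p → a ≤ p)
    (hbc : b ≤ c) (hch : c ≤ h) (hB : ¬ a ⊓ h ≤ c) :
    ∃ x y : L, c < x ∧ x ≤ h ∧ c < y ∧ y ≤ h ∧ x ⊓ y = c := by
  by_contra hno
  push_neg at hno
  have hp := himp_prime hbc hch hB hno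
  have ha := H _ hp (hbc.trans (le_himp_iff.mpr inf_le_left))
  exact hB (le_himp_iff.mp ha)

private lemma star_aux {a b c h x y : L}
    (H : ∀ p : L, PrimeElt p → b ≤ p → a ≤ p) (hbc : b ≤ c)
    (hcx : c < x) (hxh : x ≤ h) (hcy : c < y) (hyh : y ≤ h)
    (hxy : x ⊓ y = c) (hchg : ¬ a ⊓ x ≤ c) :
    ∃ u₁ u₂ v : L, c < u₁ ∧ u₁ ≤ h ∧ c < u₂ ∧ u₂ ≤ h ∧ v ≤ h ∧
      u₁ ⊓ u₂ ≤ c ∧ u₁ ⊓ v ≤ c ∧ u₂ ⊓ v ≤ c ∧ ¬ a ⊓ v ≤ c := by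
  obtain ⟨s, t, hcs, hsx, hct, htx, hst⟩ := split_lemma H hbc hcx.le hchg
  have htyc : t ⊓ y ≤ c := (inf_le_inf_right y htx).trans hxy.le
  have hsyc : s ⊓ y ≤ c := (inf_le_inf_right y hsx).trans hxy.le
  by_cases hs : ¬ a ⊓ s ≤ c
  · exact ⟨t, y, s, hct, htx.trans hxh, hcy, hyh, hsx.trans hxh, htyc,
      (inf_comm t s).le.trans hst.le, (inf_comm y s).le.trans hsyc, hs⟩
  push_neg at hs
  by_cases ht : ¬ a ⊓ t ≤ c
  · exact ⟨s, y, t, hcs, hsx.trans hxh, hcy, hyh, htx.trans hxh, hsyc,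
      hst.le, (inf_comm y t).le.trans htyc, ht⟩
  push_neg at ht
  refine ⟨t, y, s ⊔ a ⊓ x, hct, htx.trans hxh, hcy, hyh,
    sup_le (hsx.trans hxh) (inf_le_right.trans hxh), htyc, ?_, ?_, ?_⟩
  · rw [inf_sup_left]
    refine sup_le ((inf_comm t s).le.trans hst.le) ?_
    exact (le_inf (inf_le_right.trans inf_le_left) inf_le_left).trans ht
  · rw [inf_sup_left]
    refine sup_le ((inf_comm y s).le.trans hsyc) ?_
    exact ((le_inf (inf_le_right.trans inf_le_right) inf_le_left).trans hxy.le)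
  · intro hle
    exact hchg ((le_inf inf_le_left le_sup_right).trans hle)

private lemma star_lemma {a b c h : L}
    (H : ∀ p : L, PrimeElt p → b ≤ p → a ≤ p)
    (hbc : b ≤ c) (hch : c ≤ h) (hB : ¬ a ⊓ h ≤ c) :
    ∃ u₁ u₂ v : L, c < u₁ ∧ u₁ ≤ h ∧ c < u₂ ∧ u₂ ≤ h ∧ v ≤ h ∧
      u₁ ⊓ u₂ ≤ c ∧ u₁ ⊓ v ≤ c ∧ u₂ ⊓ v ≤ c ∧ ¬ a ⊓ v ≤ c := by
  obtain ⟨x, y, hcx, hxh, hcy, hyh, hxy⟩ := split_lemma H hbc hch hB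
  by_cases hx : ¬ a ⊓ x ≤ c
  · exact star_aux H hbc hcx hxh hcy hyh hxy hx
  push_neg at hx
  by_cases hy : ¬ a ⊓ y ≤ c
  · exact star_aux H hbc hcy hyh hcx hxh ((inf_comm y x).trans hxy) hy
  push_neg at hy
  refine ⟨x, y, a ⊓ h, hcx, hxh, hcy, hyh, inf_le_right, hxy.le, ?_, ?_, ?_⟩
  · exact (le_inf (inf_le_right.trans inf_le_left) inf_le_left).trans hx
  · exact (le_inf (inf_le_right.trans inf_le_left) inf_le_left).trans hy
  · rwa [← inf_assoc, inf_idem]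

/-- Key separation lemma: in a countable frame, whenever `a ≰ b` there is a prime
element above `b` and not above `a`. -/
private lemma exists_prime_separating [Countable L] {a b : L} (hab : ¬ a ≤ b) :
    ∃ p : L, PrimeElt p ∧ b ≤ p ∧ ¬ a ≤ p := by
  classical
  by_contra hno
  push_neg at hno
  have H : ∀ p : L, PrimeElt p → b ≤ p → a ≤ p := fun p hp hbp => hno p hp hbp
  have key : ∀ q : L × L, (b ≤ q.1 ∧ q.1 ≤ q.2 ∧ ¬ a ⊓ q.2 ≤ q.1) →
      ∃ g : Bool → L × L,
        (∀ i, (b ≤ (g i).1 ∧ (g i).1 ≤ (g i).2 ∧ ¬ a ⊓ (g i).2 ≤ (g i).1) ∧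
          q.1 < (g i).1 ∧ (g i).2 ≤ q.2) ∧
        (g false).1 ⊓ (g true).2 ≤ q.1 ∧ (g true).1 ⊓ (g false).2 ≤ q.1 := by
    rintro ⟨c, h⟩ ⟨hbc, hch, hB⟩
    obtain ⟨u₁, u₂, v, hcu₁, hu₁h, hcu₂, hu₂h, hvh, h12, h1v, h2v, hav⟩ :=
      star_lemma H hbc hch hB
    have main : ∀ u : L, c < u → u ≤ h → u ⊓ v ≤ c →
        (b ≤ u ∧ u ≤ u ⊔ v ∧ ¬ a ⊓ (u ⊔ v) ≤ u) ∧ c < u ∧ u ⊔ v ≤ h := by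
      intro u hcu huh huv
      refine ⟨⟨hbc.trans hcu.le, le_sup_left, ?_⟩, hcu, sup_le huh hvh⟩
      intro hle
      have hav' : a ⊓ v ≤ u :=
        (le_inf inf_le_left (inf_le_right.trans le_sup_right)).trans hle
      exact hav ((le_inf hav' inf_le_right).trans huv)
    refine ⟨fun i => cond i (u₂, u₂ ⊔ v) (u₁, u₁ ⊔ v), ?_, ?_, ?_⟩
    · intro i
      cases i
      · exact main u₁ hcu₁ hu₁h h1v
      · exact main u₂ hcu₂ hu₂h h2v
    · show u₁ ⊓ (u₂ ⊔ v) ≤ c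
      rw [inf_sup_left]
      exact sup_le h12 h1v
    · show u₂ ⊓ (u₁ ⊔ v) ≤ c
      rw [inf_sup_left]
      exact sup_le ((inf_comm u₂ u₁).le.trans h12) h2v
  haveI : Nonempty (L × L) := ⟨(b, b)⟩
  choose! g hg using key
  obtain ⟨N, hNnil, hNcons⟩ :
      ∃ N : List Bool → L × L, N [] = (b, ⊤) ∧ ∀ i s, N (i :: s) = g (N s) i :=
    ⟨fun s => s.foldr (fun i acc => g acc i) (b, ⊤), rfl, fun i s => rfl⟩
  have hGood : ∀ s, b ≤ (N s).1 ∧ (N s).1 ≤ (N s).2 ∧ ¬ a ⊓ (N s).2 ≤ (N s).1 := by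
    intro s
    induction s with
    | nil => rw [hNnil]; exact ⟨le_rfl, le_top, by simpa using hab⟩
    | cons i s ih => rw [hNcons]; exact ((hg (N s) ih).1 i).1
  obtain ⟨pre, hpre0, hpreS⟩ :
      ∃ pre : (ℕ → Bool) → ℕ → List Bool,
        (∀ α, pre α 0 = []) ∧ (∀ α n, pre α (n + 1) = α n :: pre α n) :=
    ⟨fun α n => (List.range n).reverse.map α, fun α => rfl, by
      intro α n
      simp [List.range_succ]⟩
  have hpre_eq : ∀ (α β : ℕ → Bool) (n : ℕ), (∀ i, i < n → α i = β i) →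
      pre α n = pre β n := by
    intro α β n
    induction n with
    | zero => intro _; rw [hpre0, hpre0]
    | succ n ih =>
        intro hyp
        rw [hpreS, hpreS, ih (fun i hi => hyp i (hi.trans (Nat.lt_succ_self n))),
          hyp n (Nat.lt_succ_self n)]
  have hcmono : ∀ α : ℕ → Bool, Monotone (fun n => (N (pre α n)).1) := by
    intro α
    refine monotone_nat_of_le_succ (fun n => ?_)
    rw [hpreS, hNcons]
    exact (((hg (N (pre α n)) (hGood _)).1 (α n)).2.1).le
  have hhmono : ∀ α : ℕ → Bool, Antitone (fun n => (N (pre α n)).2) := by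
    intro α
    refine antitone_nat_of_succ_le (fun n => ?_)
    rw [hpreS, hNcons]
    exact ((hg (N (pre α n)) (hGood _)).1 (α n)).2.2
  have hinj : Function.Injective (fun α : ℕ → Bool => ⨆ n, (N (pre α n)).1) := by
    intro α β hPeq
    simp only at hPeq
    by_contra hne
    have hex : ∃ n, α n ≠ β n := Function.ne_iff.mp hne
    have hd : α (Nat.find hex) ≠ β (Nat.find hex) := Nat.find_spec hex
    set n₀ := Nat.find hex with hn₀
    have hpref : pre α n₀ = pre β n₀ := by
      refine hpre_eq α β n₀ (fun i hi => ?_)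
      by_contra hcon
      exact absurd hi (not_lt.mpr (Nat.find_le hcon))
    have hkey := hg (N (pre α n₀)) (hGood _)
    have hNa : N (pre α (n₀ + 1)) = g (N (pre α n₀)) (α n₀) := by rw [hpreS, hNcons]
    have hNb : N (pre β (n₀ + 1)) = g (N (pre α n₀)) (β n₀) := by
      rw [hpreS, hNcons, ← hpref]
    have hcross : (N (pre α (n₀ + 1))).1 ⊓ (N (pre β (n₀ + 1))).2 ≤ (N (pre α n₀)).1 := by
      rw [hNa, hNb]
      cases hα : α n₀ <;> cases hβ : β n₀
      · exact absurd (hα.trans hβ.symm) hd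
      · exact hkey.2.1
      · exact hkey.2.2
      · exact absurd (hα.trans hβ.symm) hd
    have h1 : (N (pre α (n₀ + 1))).1 ≤ ⨆ n, (N (pre β n)).1 := by
      rw [← hPeq]
      exact le_iSup (fun n => (N (pre α n)).1) (n₀ + 1)
    have h2 : (N (pre α (n₀ + 1))).1 ⊓ (⨆ n, (N (pre β n)).1) ≤ (N (pre α n₀)).1 := by
      rw [inf_iSup_eq]
      refine iSup_le (fun n => ?_)
      rcases le_or_gt n n₀ with hn | hn
      · refine inf_le_right.trans ?_
        have hmono := hcmono β hn
        simpa [hpref] using hmono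
      · refine le_trans (inf_le_inf_left _ ?_) hcross
        exact le_trans ((hGood (pre β n)).2.1) (hhmono β hn)
    have hle : (N (pre α (n₀ + 1))).1 ≤ (N (pre α n₀)).1 := (le_inf le_rfl h1).trans h2
    have hlt : (N (pre α n₀)).1 < (N (pre α (n₀ + 1))).1 := by
      rw [hNa]
      exact (hkey.1 (α n₀)).2.1
    exact absurd hle (not_le_of_gt hlt)
  have hBool : Function.Injective
      (fun S : Set ℕ => ⨆ n, (N (pre (fun k => decide (k ∈ S)) n)).1) := by
    intro S T hST
    have heq := hinj hST
    ext n
    have hn := congrFun heq n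
    simpa using hn
  obtain ⟨f, hf⟩ := Countable.exists_injective_nat L
  exact Function.cantor_injective _ (hf.comp hBool)

end SpatialProof

/-- Every countable frame is spatial: each element is the infimum
of the prime elements above it. -/
theorem stmt6 {L : Type*} [Order.Frame L] [Countable L] :
    ∀ x : L, x = sInf {p : L | PrimeElt p ∧ x ≤ p} := by
  intro x
  refine le_antisymm (le_sInf (fun p hp => hp.2)) ?_
  by_contra hc
  obtain ⟨p, hp, hxp, hnp⟩ := exists_prime_separating hc
  exact hnp (sInf_le ⟨hp, hxp⟩)
end

section
/- Every countable continuous dcpo is an algebraic dcpo. -/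
open Set

section MyAux
variable {P : Type*} [PartialOrder P]

private lemma my_wb_le {x y : P} (h : WB (· ≤ ·) x y) : x ≤ y := by
  have hdir : DirOn (· ≤ ·) ({y} : Set P) := by
    refine ⟨⟨y, rfl⟩, ?_⟩
    intro a ha b hb
    rw [Set.mem_singleton_iff] at ha hb
    exact ⟨y, rfl, ha.le, hb.le⟩
  have hlub : IsLubR (· ≤ ·) ({y} : Set P) y := by
    refine ⟨?_, fun u hu => hu y rfl⟩
    intro d hd
    rw [Set.mem_singleton_iff] at hd
    exact hd.le
  obtain ⟨d, hd, hxd⟩ := h {y} hdir y hlub le_rfl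
  rw [Set.mem_singleton_iff] at hd
  exact hd ▸ hxd

private lemma my_wb_mono {a b c d : P} (hab : a ≤ b) (h : WB (· ≤ ·) b c) (hcd : c ≤ d) :
    WB (· ≤ ·) a d := fun D hD s hs hds =>
  let ⟨e, he, hbe⟩ := h D hD s hs (le_trans hcd hds)
  ⟨e, he, le_trans hab hbe⟩

private lemma my_interp (hcont : ContinuousRel ((· ≤ ·) : P → P → Prop)) {x y : P}
    (h : WB (· ≤ ·) x y) : ∃ z, WB (· ≤ ·) x z ∧ WB (· ≤ ·) z y := by
  have hdir : DirOn (· ≤ ·) {w : P | ∃ z, WB (· ≤ ·) w z ∧ WB (· ≤ ·) z y} := by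
    constructor
    · obtain ⟨z, hz⟩ := (hcont y).1.1
      obtain ⟨w, hw⟩ := (hcont z).1.1
      exact ⟨w, z, hw, hz⟩
    · rintro a ⟨za, haz, hzay⟩ b ⟨zb, hbz, hzby⟩
      obtain ⟨z, hz, hza, hzb⟩ := (hcont y).1.2 za hzay zb hzby
      obtain ⟨c, hc, hca, hcb⟩ := (hcont z).1.2 a (my_wb_mono le_rfl haz hza)
        b (my_wb_mono le_rfl hbz hzb)
      exact ⟨c, ⟨z, hc, hz⟩, hca, hcb⟩
  have hlub : IsLubR (· ≤ ·) {w : P | ∃ z, WB (· ≤ ·) w z ∧ WB (· ≤ ·) z y} y := by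
    constructor
    · rintro w ⟨z, hwz, hzy⟩; exact le_trans (my_wb_le hwz) (my_wb_le hzy)
    · intro u hu
      refine (hcont y).2.2 u fun z hz => ?_
      exact (hcont z).2.2 u fun w hw => hu w ⟨z, hw, hz⟩
  obtain ⟨w, hw, hxw⟩ := h _ hdir y hlub le_rfl
  obtain ⟨z, hwz, hzy⟩ := hw
  exact ⟨z, my_wb_mono hxw hwz le_rfl, hzy⟩

private def myPts {σ : Type*} (child : σ → Bool → σ) (root : σ) (a : ℕ → Bool) : ℕ → σ
  | 0 => root
  | n+1 => child (myPts child root a n) (a n)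

private lemma myPts_congr {σ : Type*} (child : σ → Bool → σ) (root : σ) {a b : ℕ → Bool} :
    ∀ n, (∀ m < n, a m = b m) → myPts child root a n = myPts child root b n
  | 0, _ => rfl
  | n+1, h => by
    simp only [myPts, myPts_congr child root n (fun m hm => h m (Nat.lt_succ_of_lt hm)),
      h n (Nat.lt_succ_self n)]

private lemma my_exists_compact [Countable P]
    (hdcpo : DcpoRel ((· ≤ ·) : P → P → Prop))
    (hcont : ContinuousRel ((· ≤ ·) : P → P → Prop)) {x y : P}
    (hxy : WB (· ≤ ·) x y) :
    ∃ k, WB (· ≤ ·) k k ∧ x ≤ k ∧ k ≤ y := by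
  by_contra hno
  push_neg at hno
  have hnc : ∀ z, x ≤ z → WB (· ≤ ·) z y → ¬ WB (· ≤ ·) z z := fun z h1 h2 h3 =>
    hno z h3 h1 (my_wb_le h2)
  set G : P × P → Prop := fun p =>
    x ≤ p.1 ∧ WB (· ≤ ·) p.1 y ∧ WB (· ≤ ·) p.2 y ∧ WB (· ≤ ·) p.1 p.2 with hGdef
  have hstep : ∀ p : P × P, ∃ q : (P × P) × (P × P), G p →
      G q.1 ∧ G q.2 ∧ p.1 ≤ q.1.1 ∧ p.1 ≤ q.2.1 ∧ q.1.2 ≤ p.2 ∧ q.2.2 ≤ p.2 ∧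
        WB (· ≤ ·) q.1.2 q.2.1 ∧ q.1.2 ≠ q.2.1 := by
    intro p
    by_cases hp : G p
    · obtain ⟨hx1, h1y, h2y, h12⟩ := hp
      obtain ⟨m, hzm, hmc⟩ := my_interp hcont h12
      have hmy : WB (· ≤ ·) m y := my_wb_mono le_rfl hmc (my_wb_le h2y)
      obtain ⟨z', hzz', hz'm⟩ := my_interp hcont hzm
      obtain ⟨m', hmm', hm'c⟩ := my_interp hcont hmc
      have hxm : x ≤ m := le_trans hx1 (my_wb_le hzm)
      refine ⟨((z', m), (m', p.2)), fun _ => ?_⟩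
      refine ⟨⟨le_trans hx1 (my_wb_le hzz'),
          my_wb_mono le_rfl hz'm (my_wb_le hmy), hmy, hz'm⟩,
        ⟨le_trans hxm (my_wb_le hmm'),
          my_wb_mono le_rfl hm'c (my_wb_le h2y), h2y, hm'c⟩,
        my_wb_le hzz', le_trans (my_wb_le hzm) (my_wb_le hmm'),
        my_wb_le hmc, le_rfl, hmm', ?_⟩
      intro hmeq
      have hmeq' : m = m' := hmeq
      exact hnc m hxm hmy (hmeq' ▸ hmm')
    · exact ⟨(p, p), fun h => absurd h hp⟩
  choose F hF using hstep
  set child : P × P → Bool → P × P := fun p b => if b then (F p).2 else (F p).1 with hchild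
  -- the root
  obtain ⟨c₀, hxc₀, hc₀y⟩ := my_interp hcont hxy
  obtain ⟨z₀, hxz₀, hz₀c₀⟩ := my_interp hcont hxc₀
  set root : P × P := (z₀, c₀) with hroot
  have hGroot : G root := ⟨my_wb_le hxz₀,
    my_wb_mono le_rfl hz₀c₀ (my_wb_le hc₀y), hc₀y, hz₀c₀⟩
  have hGchild : ∀ p, G p → ∀ b, G (child p b) := by
    intro p hp b
    cases b
    · simpa [hchild] using (hF p hp).1
    · simpa [hchild] using (hF p hp).2.1
  have hGood : ∀ (a : ℕ → Bool) n, G (myPts child root a n) := by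
    intro a n
    induction n with
    | zero => exact hGroot
    | succ n ih => exact hGchild _ ih _
  have hmono1 : ∀ (a : ℕ → Bool) n,
      (myPts child root a n).1 ≤ (myPts child root a (n+1)).1 := by
    intro a n
    have hp := hGood a n
    show (myPts child root a n).1 ≤ (child (myPts child root a n) (a n)).1
    cases han : a n
    · simpa [hchild] using (hF _ hp).2.2.1
    · simpa [hchild] using (hF _ hp).2.2.2.1
  have hmono : ∀ (a : ℕ → Bool), Monotone fun n => (myPts child root a n).1 := fun a =>
    monotone_nat_of_le_succ (hmono1 a)
  have hceil1 : ∀ (a : ℕ → Bool) n,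
      (myPts child root a (n+1)).2 ≤ (myPts child root a n).2 := by
    intro a n
    have hp := hGood a n
    show (child (myPts child root a n) (a n)).2 ≤ (myPts child root a n).2
    cases han : a n
    · simpa [hchild] using (hF _ hp).2.2.2.2.1
    · simpa [hchild] using (hF _ hp).2.2.2.2.2.1
  have hceil : ∀ (a : ℕ → Bool), Antitone fun n => (myPts child root a n).2 := fun a =>
    antitone_nat_of_succ_le (hceil1 a)
  have hzc : ∀ (a : ℕ → Bool) n, (myPts child root a n).1 ≤ (myPts child root a n).2 :=
    fun a n => my_wb_le (hGood a n).2.2.2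
  have hbound : ∀ (a : ℕ → Bool) n k, n ≤ k →
      (myPts child root a k).1 ≤ (myPts child root a n).2 :=
    fun a n k hnk => le_trans (hzc a k) (hceil a hnk)
  have hdirD : ∀ a : ℕ → Bool, DirOn (· ≤ ·) (Set.range fun n => (myPts child root a n).1) := by
    intro a
    refine ⟨⟨_, ⟨0, rfl⟩⟩, ?_⟩
    rintro _ ⟨i, rfl⟩ _ ⟨j, rfl⟩
    exact ⟨_, ⟨max i j, rfl⟩, hmono a (le_max_left i j), hmono a (le_max_right i j)⟩
  have hsupex : ∀ a : ℕ → Bool, ∃ s,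
      IsLubR (· ≤ ·) (Set.range fun n => (myPts child root a n).1) s :=
    fun a => hdcpo _ (hdirD a)
  choose sup hsup using hsupex
  have hkey : ∀ a b : ℕ → Bool, ∀ n, (∀ m < n, a m = b m) → a n = false → b n = true →
      sup a ≠ sup b := by
    intro a b n hag ha hb heq
    have hpe : myPts child root a n = myPts child root b n := myPts_congr child root n hag
    have hGp : G (myPts child root a n) := hGood a n
    have hA : myPts child root a (n+1) = (F (myPts child root a n)).1 := by
      show child (myPts child root a n) (a n) = _
      rw [ha]; simp [hchild]
    have hB : myPts child root b (n+1) = (F (myPts child root a n)).2 := by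
      show child (myPts child root b n) (b n) = _
      rw [hb, ← hpe]; simp [hchild]
    have hub : ∀ k, (myPts child root a k).1 ≤ (F (myPts child root a n)).1.2 := by
      intro k
      have hsnd : (myPts child root a (n+1)).2 = (F (myPts child root a n)).1.2 :=
        congrArg Prod.snd hA
      rcases le_or_gt k (n+1) with h | h
      · exact hsnd ▸ le_trans (hmono a h) (hzc a (n+1))
      · exact hsnd ▸ hbound a (n+1) k h.le
    have h1 : sup a ≤ (F (myPts child root a n)).1.2 :=
      (hsup a).2 _ (by rintro d ⟨k, rfl⟩; exact hub k)
    have h2 : (F (myPts child root a n)).2.1 ≤ sup b :=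
      (hsup b).1 _ ⟨n+1, congrArg Prod.fst hB⟩
    have hle : (F (myPts child root a n)).1.2 ≤ (F (myPts child root a n)).2.1 :=
      my_wb_le (hF _ hGp).2.2.2.2.2.2.1
    have hge : (F (myPts child root a n)).2.1 ≤ (F (myPts child root a n)).1.2 :=
      le_trans h2 (heq ▸ h1)
    exact (hF _ hGp).2.2.2.2.2.2.2 (le_antisymm hle hge)
  have hinj : Function.Injective sup := by
    intro a b heq
    by_contra hab
    have hex : ∃ n, a n ≠ b n := by
      by_contra h'
      push_neg at h'
      exact hab (funext h')
    have hag : ∀ m < Nat.find hex, a m = b m := fun m hm => not_not.1 (Nat.find_min hex hm)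
    have hne := Nat.find_spec hex
    cases han : a (Nat.find hex) <;> cases hbn : b (Nat.find hex)
    · rw [han, hbn] at hne; exact hne rfl
    · exact hkey a b _ hag han hbn heq
    · exact hkey b a _ (fun m hm => (hag m hm).symm) hbn han heq.symm
    · rw [han, hbn] at hne; exact hne rfl
  have hcnt : Countable (ℕ → Bool) := hinj.countable
  obtain ⟨g, hg⟩ := @exists_surjective_nat (ℕ → Bool) ⟨fun _ => false⟩ hcnt
  obtain ⟨n, hn⟩ := hg fun k => !(g k k)
  have := congrFun hn n
  simp at this

end MyAux

/-- Every countable continuous dcpo is algebraic. -/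
theorem stmt7 {P : Type*} [PartialOrder P] [Countable P]
    (hdcpo : DcpoRel ((· ≤ ·) : P → P → Prop))
    (hcont : ContinuousRel ((· ≤ ·) : P → P → Prop)) :
    AlgebraicRel ((· ≤ ·) : P → P → Prop) := by
  intro y
  have hD := (hcont y).1
  have hL := (hcont y).2
  constructor
  · constructor
    · obtain ⟨x, hx⟩ := hD.1
      obtain ⟨k, hk, hxk, hky⟩ := my_exists_compact hdcpo hcont hx
      exact ⟨k, ⟨hk, hky⟩⟩
    · rintro a ⟨ha, hay⟩ b ⟨hb, hby⟩
      obtain ⟨z, hz, hza, hzb⟩ := hD.2 a (my_wb_mono le_rfl ha hay)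
        b (my_wb_mono le_rfl hb hby)
      obtain ⟨k, hk, hzk, hky⟩ := my_exists_compact hdcpo hcont hz
      exact ⟨k, ⟨hk, hky⟩, le_trans hza hzk, le_trans hzb hzk⟩
  · constructor
    · rintro d ⟨hd, hdy⟩
      exact hdy
    · intro u hu
      refine hL.2 u fun z hz => ?_
      obtain ⟨k, hk, hzk, hky⟩ := my_exists_compact hdcpo hcont hz
      exact le_trans hzk (hu k ⟨hk, hky⟩)
end

section
/- A dcpo P is quasicontinuous if and only if the family of all sets ↑F, for F a finite subset of P, ordered by reverse inclusion, forms a continuous poset (Heckmann–Keimel characterization). -/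
open Set

section Aux
variable {P : Type*} [PartialOrder P]

local notation "lp" => ((· ≤ ·) : P → P → Prop)

lemma UpS_upward {F : Set P} {x y : P} (hx : x ∈ UpS lp F) (hxy : x ≤ y) :
    y ∈ UpS lp F := by
  obtain ⟨f, hf, hfx⟩ := hx; exact ⟨f, hf, hfx.trans hxy⟩

lemma subset_UpS {F : Set P} : F ⊆ UpS lp F := fun x hx => ⟨x, hx, le_refl x⟩

lemma UpS_subset {A F : Set P} (h : A ⊆ UpS lp F) : UpS lp A ⊆ UpS lp F := by
  rintro x ⟨a, ha, hax⟩; exact UpS_upward (h ha) hax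

lemma chain_inter_finite {α : Type*} {C : Set (Set α)} (hC : IsChain (· ⊆ ·) C)
    (hne : C.Nonempty) {S : Set α} (hS : S.Finite)
    (h : ∀ A ∈ C, (A ∩ S).Nonempty) : (⋂₀ C ∩ S).Nonempty := by
  have hK : {k | ∃ A ∈ C, (A ∩ S).ncard = k}.Nonempty := by
    obtain ⟨A, hA⟩ := hne; exact ⟨(A ∩ S).ncard, A, hA, rfl⟩
  obtain ⟨A₀, hA₀, hcard⟩ := Nat.sInf_mem hK
  have hmin : ∀ A ∈ C, A₀ ∩ S ⊆ A ∩ S := by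
    intro A hA
    rcases eq_or_ne A A₀ with rfl | hne'
    · exact Set.Subset.rfl
    rcases hC hA hA₀ hne' with hsub | hsub
    · have h1 : A ∩ S ⊆ A₀ ∩ S := Set.inter_subset_inter_left _ hsub
      have h2 : (A₀ ∩ S).ncard ≤ (A ∩ S).ncard := by
        rw [hcard]; exact Nat.sInf_le ⟨A, hA, rfl⟩
      have := Set.eq_of_subset_of_ncard_le h1 h2 (hS.inter_of_right A₀)
      rw [this]
    · exact Set.inter_subset_inter_left _ hsub
  obtain ⟨x, hx⟩ := h A₀ hA₀
  exact ⟨x, fun A hA => ((hmin A hA) hx).1, hx.2⟩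

/-- Rudin's Lemma. -/
lemma rudin {𝓕 : Set (Finset P)} (hne : 𝓕.Nonempty)
    (hfne : ∀ F ∈ 𝓕, F.Nonempty)
    (hdir : ∀ F ∈ 𝓕, ∀ G ∈ 𝓕, ∃ H ∈ 𝓕,
      (H : Set P) ⊆ UpS lp (F : Set P) ∧ (H : Set P) ⊆ UpS lp (G : Set P)) :
    ∃ D : Set P, DirOn lp D ∧ (∀ x ∈ D, ∃ F ∈ 𝓕, x ∈ F) ∧
      ∀ F ∈ 𝓕, ∃ x ∈ D, x ∈ F := by
  classical
  -- the collection of "good" sets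
  set S : Set (Set P) :=
    {M | (∀ F ∈ 𝓕, ∃ x ∈ M, x ∈ F) ∧
      (∀ F ∈ 𝓕, ∀ G ∈ 𝓕, (G : Set P) ⊆ UpS lp (F : Set P) →
        ∀ c ∈ M, c ∈ (G : Set P) → ∃ f ∈ M, f ∈ F ∧ f ≤ c) ∧
      M ⊆ {x | ∃ F ∈ 𝓕, x ∈ F}} with hS
  have hbase : {x | ∃ F ∈ 𝓕, x ∈ (F : Set P)} ∈ S := by
    refine ⟨fun F hF => ?_, fun F hF G hG hFG c hc hcG => ?_, fun x hx => ?_⟩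
    · obtain ⟨x, hx⟩ := hfne F hF
      exact ⟨x, ⟨F, hF, hx⟩, hx⟩
    · obtain ⟨f, hfF, hfc⟩ := hFG hcG
      exact ⟨f, ⟨F, hF, hfF⟩, hfF, hfc⟩
    · exact hx
  have hzorn : ∀ c ⊆ S, IsChain (· ⊆ ·) c → c.Nonempty →
      ∃ lb ∈ S, ∀ s ∈ c, lb ⊆ s := by
    intro c hcS hchain hcne
    refine ⟨⋂₀ c, ⟨fun F hF => ?_, fun F hF G hG hFG x hx hxG => ?_, ?_⟩,
      fun s hs => sInter_subset_of_mem hs⟩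
    · obtain ⟨y, hy1, hy2⟩ := chain_inter_finite hchain hcne F.finite_toSet
        (fun A hA => by
          obtain ⟨z, hz1, hz2⟩ := (hcS hA).1 F hF
          exact ⟨z, hz1, hz2⟩)
      exact ⟨y, hy1, hy2⟩
    · -- use chain lemma with S = F ∩ {f | f ≤ x}
      obtain ⟨y, hy1, hy2⟩ := chain_inter_finite hchain hcne
        (S := (F : Set P) ∩ {f | f ≤ x}) (F.finite_toSet.inter_of_left _)
        (fun A hA => by
          obtain ⟨f, hf1, hf2, hf3⟩ := (hcS hA).2.1 F hF G hG hFG x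
            (hx A hA) hxG
          exact ⟨f, hf1, hf2, hf3⟩)
      exact ⟨y, hy1, hy2.1, hy2.2⟩
    · obtain ⟨A, hA⟩ := hcne
      exact (sInter_subset_of_mem hA).trans (hcS hA).2.2
  obtain ⟨M, -, hMmin⟩ := zorn_superset_nonempty S hzorn _ hbase
  obtain ⟨hP1, hP2, hP3⟩ := hMmin.prop
  -- key claim from minimality
  have key : ∀ a ∈ M, ∃ F ∈ 𝓕, ∀ x ∈ M, x ∈ F → a ≤ x := by
    intro a ha
    by_contra hcon
    push_neg at hcon
    -- N = M minus the strict up-set of a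
    set N : Set P := M ∩ {y | ¬ a ≤ y} with hN
    have hNS : N ∈ S := by
      refine ⟨fun F hF => ?_, fun F hF G hG hFG c hc hcG => ?_,
        (inter_subset_left).trans hP3⟩
      · obtain ⟨x, hx1, hx2, hx3⟩ := hcon F hF
        exact ⟨x, ⟨hx1, hx3⟩, hx2⟩
      · obtain ⟨f, hf1, hf2, hf3⟩ := hP2 F hF G hG hFG c hc.1 hcG
        refine ⟨f, ⟨hf1, fun haf => hc.2 (haf.trans hf3)⟩, hf2, hf3⟩
    have heq := hMmin.eq_of_subset hNS inter_subset_left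
    have haN : a ∈ N := by rw [heq]; exact ha
    exact haN.2 le_rfl
  refine ⟨M, ⟨?_, ?_⟩, fun x hx => hP3 hx, fun F hF => hP1 F hF⟩
  · obtain ⟨F, hF⟩ := hne
    obtain ⟨x, hx, -⟩ := hP1 F hF
    exact ⟨x, hx⟩
  · intro a ha b hb
    obtain ⟨F₁, hF₁, hkey₁⟩ := key a ha
    obtain ⟨F₂, hF₂, hkey₂⟩ := key b hb
    obtain ⟨H, hH, hHF₁, hHF₂⟩ := hdir F₁ hF₁ F₂ hF₂
    obtain ⟨c, hcM, hcH⟩ := hP1 H hH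
    obtain ⟨f₁, hf₁M, hf₁F, hf₁c⟩ := hP2 F₁ hF₁ H hH hHF₁ c hcM hcH
    obtain ⟨f₂, hf₂M, hf₂F, hf₂c⟩ := hP2 F₂ hF₂ H hH hHF₂ c hcM hcH
    exact ⟨c, hcM, (hkey₁ f₁ hf₁M hf₁F).trans hf₁c, (hkey₂ f₂ hf₂M hf₂F).trans hf₂c⟩

end Aux

section WBIff
variable {P : Type*} [PartialOrder P]

local notation "lp" => ((· ≤ ·) : P → P → Prop)
local notation "Qt" => {S : Set P // ∃ F : Finset P, S = UpS lp (F : Set P)}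

end WBIff

/-- the reverse-inclusion relation on finitely generated upper sets -/
abbrev rQ (P : Type*) [PartialOrder P] :
    {S : Set P // ∃ F : Finset P, S = UpS ((· ≤ ·) : P → P → Prop) (F : Set P)} →
    {S : Set P // ∃ F : Finset P, S = UpS ((· ≤ ·) : P → P → Prop) (F : Set P)} → Prop :=
  fun A B => B.1 ⊆ A.1

section WBIff
variable {P : Type*} [PartialOrder P]

local notation "lp" => ((· ≤ ·) : P → P → Prop)
local notation "Qt" => {S : Set P // ∃ F : Finset P, S = UpS lp (F : Set P)}

lemma wb_iff (hdcpo : DcpoRel lp) (F G : Finset P) :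
    WB (rQ P) ⟨UpS lp (F : Set P), F, rfl⟩ ⟨UpS lp (G : Set P), G, rfl⟩ ↔
      SetWB lp (F : Set P) (G : Set P) := by
  classical
  constructor
  · intro h D hD s hs hsG
    set 𝓓 : Set Qt :=
      (fun d : P => (⟨UpS lp (({d} : Finset P) : Set P), {d}, rfl⟩ : Qt)) '' D with h𝓓
    have hdir : DirOn (rQ P) 𝓓 := by
      refine ⟨hD.1.image _, ?_⟩
      rintro _ ⟨d₁, hd₁, rfl⟩ _ ⟨d₂, hd₂, rfl⟩
      obtain ⟨c, hc, hc₁, hc₂⟩ := hD.2 d₁ hd₁ d₂ hd₂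
      refine ⟨_, ⟨c, hc, rfl⟩, ?_, ?_⟩
      · rintro y ⟨f, hf, hfy⟩
        simp only [Finset.coe_singleton, Set.mem_singleton_iff] at hf
        subst hf
        exact ⟨d₁, by simp, hc₁.trans hfy⟩
      · rintro y ⟨f, hf, hfy⟩
        simp only [Finset.coe_singleton, Set.mem_singleton_iff] at hf
        subst hf
        exact ⟨d₂, by simp, hc₂.trans hfy⟩
    have hlub : IsLubR (rQ P) 𝓓 ⟨UpS lp (({s} : Finset P) : Set P), {s}, rfl⟩ := by
      constructor
      · rintro _ ⟨d, hd, rfl⟩ y ⟨f, hf, hfy⟩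
        simp only [Finset.coe_singleton, Set.mem_singleton_iff] at hf
        subst hf
        exact ⟨d, by simp, (hs.1 d hd).trans hfy⟩
      · intro u hu x hx
        refine ⟨s, by simp, hs.2 x (fun d hd => ?_)⟩
        obtain ⟨f, hf, hfx⟩ := hu _ ⟨d, hd, rfl⟩ hx
        simp only [Finset.coe_singleton, Set.mem_singleton_iff] at hf
        subst hf
        exact hfx
    have hGs : rQ P (⟨UpS lp (G : Set P), G, rfl⟩ : Qt)
        ⟨UpS lp (({s} : Finset P) : Set P), {s}, rfl⟩ := by
      rintro y ⟨f, hf, hfy⟩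
      simp only [Finset.coe_singleton, Set.mem_singleton_iff] at hf
      subst hf
      exact UpS_upward hsG hfy
    obtain ⟨_, ⟨d₀, hd₀, rfl⟩, hsub⟩ := h 𝓓 hdir _ hlub hGs
    exact ⟨d₀, hd₀, hsub ⟨d₀, by simp, le_rfl⟩⟩
  · intro h 𝓓 h𝓓 s hs hsub
    by_contra hcon
    push_neg at hcon
    -- representatives
    have hrep : ∀ A : Qt, A.1 = UpS lp ((A.2.choose : Finset P) : Set P) :=
      fun A => A.2.choose_spec
    set filt : Qt → Finset P :=
      fun A => (A.2.choose).filter (fun y => y ∉ UpS lp (F : Set P)) with hfilt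
    have hfilt_mem : ∀ (A : Qt) (y : P), y ∈ filt A ↔ y ∈ A.2.choose ∧
        y ∉ UpS lp (F : Set P) := by
      intro A y; simp [hfilt]
    set 𝓕 : Set (Finset P) := filt '' 𝓓 with h𝓕
    have hne : 𝓕.Nonempty := h𝓓.1.image _
    have hfne : ∀ E ∈ 𝓕, E.Nonempty := by
      rintro _ ⟨A, hA, rfl⟩
      by_contra hcon2
      rw [Finset.not_nonempty_iff_eq_empty] at hcon2
      refine hcon A hA ?_
      show A.1 ⊆ UpS lp (F : Set P)
      rw [hrep A]
      refine UpS_subset (fun y hy => ?_)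
      by_contra hyF
      have : y ∈ filt A := (hfilt_mem A y).2 ⟨hy, hyF⟩
      simp [hcon2] at this
    have hdirF : ∀ E₁ ∈ 𝓕, ∀ E₂ ∈ 𝓕, ∃ H ∈ 𝓕,
        (H : Set P) ⊆ UpS lp (E₁ : Set P) ∧ (H : Set P) ⊆ UpS lp (E₂ : Set P) := by
      rintro _ ⟨A₁, hA₁, rfl⟩ _ ⟨A₂, hA₂, rfl⟩
      obtain ⟨A₃, hA₃, h₁, h₂⟩ := h𝓓.2 A₁ hA₁ A₂ hA₂
      refine ⟨filt A₃, ⟨A₃, hA₃, rfl⟩, ?_, ?_⟩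
      · intro y hy
        rw [Finset.mem_coe, hfilt_mem] at hy
        have : y ∈ A₁.1 := h₁ (by rw [hrep A₃]; exact subset_UpS hy.1)
        rw [hrep A₁] at this
        obtain ⟨f, hf, hfy⟩ := this
        refine ⟨f, ?_, hfy⟩
        rw [Finset.mem_coe, hfilt_mem]
        exact ⟨hf, fun hfF => hy.2 (UpS_upward hfF hfy)⟩
      · intro y hy
        rw [Finset.mem_coe, hfilt_mem] at hy
        have : y ∈ A₂.1 := h₂ (by rw [hrep A₃]; exact subset_UpS hy.1)
        rw [hrep A₂] at this
        obtain ⟨f, hf, hfy⟩ := this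
        refine ⟨f, ?_, hfy⟩
        rw [Finset.mem_coe, hfilt_mem]
        exact ⟨hf, fun hfF => hy.2 (UpS_upward hfF hfy)⟩
    obtain ⟨D, hDdir, hDsub, hDmeet⟩ := rudin hne hfne hdirF
    obtain ⟨t, ht⟩ := hdcpo D hDdir
    -- t belongs to every member of 𝓓
    have htA : ∀ A ∈ 𝓓, t ∈ A.1 := by
      intro A hA
      obtain ⟨x, hxD, hxE⟩ := hDmeet (filt A) ⟨A, hA, rfl⟩
      rw [hrep A]
      exact UpS_upward (subset_UpS (Finset.mem_coe.mpr ((hfilt_mem A x).1 hxE).1))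
        (ht.1 x hxD)
    have h1 : ∀ A ∈ 𝓓, rQ P A (⟨UpS lp (({t} : Finset P) : Set P), {t}, rfl⟩ : Qt) := by
      intro A hA y hy
      obtain ⟨f, hf, hfy⟩ := hy
      simp only [Finset.coe_singleton, Set.mem_singleton_iff] at hf
      subst hf
      have ht' := htA A hA
      show y ∈ A.1
      rw [hrep A] at ht' ⊢
      exact UpS_upward ht' hfy
    have h2 := hs.2 _ h1
    have htG : t ∈ UpS lp (G : Set P) := hsub (h2 ⟨t, by simp, le_rfl⟩)
    obtain ⟨x, hxD, hxF⟩ := h D hDdir t ht htG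
    obtain ⟨_, ⟨A, hA, rfl⟩, hxE⟩ := hDsub x hxD
    exact ((hfilt_mem A x).1 hxE).2 hxF

lemma wb_iff' (hdcpo : DcpoRel lp) (A B : Qt) (F G : Finset P)
    (hA : A.1 = UpS lp (F : Set P)) (hB : B.1 = UpS lp (G : Set P)) :
    WB (rQ P) A B ↔ SetWB lp (F : Set P) (G : Set P) := by
  rw [show A = (⟨UpS lp (F : Set P), F, rfl⟩ : Qt) from Subtype.ext hA,
    show B = (⟨UpS lp (G : Set P), G, rfl⟩ : Qt) from Subtype.ext hB]
  exact wb_iff hdcpo F G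

lemma setWB_of_subset {F F' G : Set P} (hF : F ⊆ UpS lp F')
    (h : SetWB lp F G) : SetWB lp F' G := by
  intro D hD s hs hsG
  obtain ⟨d, hd, hdF⟩ := h D hD s hs hsG
  exact ⟨d, hd, UpS_subset hF hdF⟩

lemma setWB_iff_forall {F G : Finset P} :
    SetWB lp (F : Set P) (G : Set P) ↔
      ∀ g ∈ G, SetWB lp (F : Set P) ({g} : Set P) := by
  constructor
  · intro h g hg D hD s hs hsg
    obtain ⟨f, hf, hfs⟩ := hsg
    rw [Set.mem_singleton_iff] at hf
    rw [hf] at hfs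
    exact h D hD s hs ⟨g, hg, hfs⟩
  · intro h D hD s hs hsG
    obtain ⟨g, hg, hgs⟩ := hsG
    exact h g hg D hD s hs ⟨g, rfl, hgs⟩

end WBIff

/-- Heckmann–Keimel: A dcpo `P` is quasicontinuous iff the family
of all sets `↑F`, `F` finite, ordered by reverse inclusion, is a continuous poset. -/
theorem stmt10 {P : Type*} [PartialOrder P]
    (hdcpo : DcpoRel ((· ≤ ·) : P → P → Prop)) :
    QuasicontinuousRel ((· ≤ ·) : P → P → Prop) ↔
      ContinuousRel
        (fun A B : {S : Set P // ∃ F : Finset P, S = UpS (· ≤ ·) (F : Set P)} =>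
          B.1 ⊆ A.1) := by
  classical
  constructor
  · intro hq
    show ContinuousRel (rQ P)
    intro B
    obtain ⟨SB, hSB⟩ := B
    obtain ⟨G, rfl⟩ := hSB
    set B : {S : Set P // ∃ F : Finset P, S = UpS (· ≤ ·) (F : Set P)} :=
      ⟨UpS (· ≤ ·) (G : Set P), G, rfl⟩ with hB
    have hchar : ∀ (A : {S : Set P // ∃ F : Finset P, S = UpS (· ≤ ·) (F : Set P)})
        (F : Finset P), A.1 = UpS (· ≤ ·) (F : Set P) →
        (WB (rQ P) A B ↔ ∀ g ∈ G, SetWB (· ≤ ·) (F : Set P) ({g} : Set P)) :=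
      fun A F hA => (wb_iff' hdcpo A B F G hA rfl).trans setWB_iff_forall
    constructor
    · constructor
      · -- nonempty
        set K : Finset P := G.attach.biUnion (fun p => ((hq p.1).1.1).some) with hK
        refine ⟨⟨UpS (· ≤ ·) (K : Set P), K, rfl⟩, (hchar _ K rfl).mpr ?_⟩
        intro g hg
        refine setWB_of_subset ?_ ((hq g).1.1.some_mem)
        refine Set.Subset.trans ?_ subset_UpS
        have := Finset.subset_biUnion_of_mem (s := G.attach)
          (fun p => ((hq p.1).1.1).some) (Finset.mem_attach G ⟨g, hg⟩)
        exact_mod_cast this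
      · -- directed pairs
        intro A₁ h₁ A₂ h₂
        obtain ⟨F₁, hA₁⟩ := A₁.2
        obtain ⟨F₂, hA₂⟩ := A₂.2
        have k₁ := (hchar A₁ F₁ hA₁).mp h₁
        have k₂ := (hchar A₂ F₂ hA₂).mp h₂
        choose E hE1 hE2 hE3 using
          (fun g (hg : g ∈ G) => (hq g).1.2 F₁ (k₁ g hg) F₂ (k₂ g hg))
        set K : Finset P := G.attach.biUnion (fun p => E p.1 p.2) with hK
        have hsub : ∀ g (hg : g ∈ G), (E g hg : Set P) ⊆ (K : Set P) := by
          intro g hg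
          have := Finset.subset_biUnion_of_mem (s := G.attach)
            (fun p => E p.1 p.2) (Finset.mem_attach G ⟨g, hg⟩)
          exact_mod_cast this
        refine ⟨⟨UpS (· ≤ ·) (K : Set P), K, rfl⟩, (hchar _ K rfl).mpr ?_, ?_, ?_⟩
        · intro g hg
          exact setWB_of_subset ((hsub g hg).trans subset_UpS) (hE1 g hg)
        · show UpS (· ≤ ·) (K : Set P) ⊆ A₁.1
          rw [hA₁]
          refine UpS_subset ?_
          intro y hy
          obtain ⟨⟨g, hg⟩, -, hyE⟩ := Finset.mem_biUnion.mp hy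
          exact hE2 g hg hyE
        · show UpS (· ≤ ·) (K : Set P) ⊆ A₂.1
          rw [hA₂]
          refine UpS_subset ?_
          intro y hy
          obtain ⟨⟨g, hg⟩, -, hyE⟩ := Finset.mem_biUnion.mp hy
          exact hE3 g hg hyE
    · constructor
      · -- B is an upper bound
        intro A hA
        obtain ⟨F, hAF⟩ := A.2
        have k := (hchar A F hAF).mp hA
        show B.1 ⊆ A.1
        rw [hAF]
        rintro y ⟨g, hg, hgy⟩
        have hy : y ∈ UpS (· ≤ ·) ({g} : Set P) := ⟨g, rfl, hgy⟩
        rw [(hq g).2] at hy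
        exact Set.mem_iInter₂.mp hy F (k g hg)
      · -- B is the least upper bound
        intro u hu
        show u.1 ⊆ B.1
        intro y hy
        by_contra hyG
        have hnot : ∀ g (hg : g ∈ G), ∃ F ∈ FinFam (· ≤ ·) g,
            y ∉ UpS (· ≤ ·) (F : Set P) := by
          intro g hg
          have : y ∉ UpS (· ≤ ·) ({g} : Set P) := by
            rintro ⟨g', hg', hl⟩
            rw [Set.mem_singleton_iff] at hg'
            exact hyG ⟨g, hg, hg' ▸ hl⟩
          rw [(hq g).2] at this
          simpa [Set.mem_iInter] using this
        choose E hE1 hE2 using hnot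
        set K : Finset P := G.attach.biUnion (fun p => E p.1 p.2) with hK
        have hmem : WB (rQ P) ⟨UpS (· ≤ ·) (K : Set P), K, rfl⟩ B := by
          refine (hchar _ K rfl).mpr ?_
          intro g hg
          refine setWB_of_subset ?_ (hE1 g hg)
          refine Set.Subset.trans ?_ subset_UpS
          have := Finset.subset_biUnion_of_mem (s := G.attach)
            (fun p => E p.1 p.2) (Finset.mem_attach G ⟨g, hg⟩)
          exact_mod_cast this
        have := hu _ hmem hy
        obtain ⟨f, hfK, hfy⟩ := this
        obtain ⟨⟨g, hg⟩, -, hfE⟩ := Finset.mem_biUnion.mp hfK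
        exact hE2 g hg ⟨f, hfE, hfy⟩
  · intro hc
    replace hc : ContinuousRel (rQ P) := hc
    intro x
    set B : {S : Set P // ∃ F : Finset P, S = UpS (· ≤ ·) (F : Set P)} :=
      ⟨UpS (· ≤ ·) ((({x} : Finset P)) : Set P), {x}, rfl⟩ with hB
    obtain ⟨hdirW, hlubW⟩ := hc B
    have hch : ∀ (A : {S : Set P // ∃ F : Finset P, S = UpS (· ≤ ·) (F : Set P)})
        (F : Finset P), A.1 = UpS (· ≤ ·) (F : Set P) →
        (WB (rQ P) A B ↔ SetWB (· ≤ ·) (F : Set P) ({x} : Set P)) := by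
      intro A F hA
      refine (wb_iff' hdcpo A B F {x} hA rfl).trans ?_
      rw [Finset.coe_singleton]
    constructor
    · constructor
      · -- FinFam nonempty
        obtain ⟨A, hA⟩ := hdirW.1
        obtain ⟨F, hAF⟩ := A.2
        exact ⟨F, (hch A F hAF).mp hA⟩
      · -- Smyth directed
        intro F₁ h₁ F₂ h₂
        have m₁ : WB (rQ P) ⟨UpS (· ≤ ·) (F₁ : Set P), F₁, rfl⟩ B :=
          (hch _ F₁ rfl).mpr h₁
        have m₂ : WB (rQ P) ⟨UpS (· ≤ ·) (F₂ : Set P), F₂, rfl⟩ B :=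
          (hch _ F₂ rfl).mpr h₂
        obtain ⟨C, hCW, hr₁, hr₂⟩ := hdirW.2 _ m₁ _ m₂
        obtain ⟨H, hCH⟩ := C.2
        refine ⟨H, (hch C H hCH).mp hCW, ?_, ?_⟩
        · intro y hy
          have hyC : y ∈ C.1 := by rw [hCH]; exact subset_UpS hy
          exact hr₁ hyC
        · intro y hy
          have hyC : y ∈ C.1 := by rw [hCH]; exact subset_UpS hy
          exact hr₂ hyC
    · refine Set.Subset.antisymm ?_ ?_
      · rintro y ⟨x', hx', hxy⟩
        rw [Set.mem_singleton_iff] at hx'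
        subst hx'
        refine Set.mem_iInter₂.mpr fun F hF => ?_
        have hFW : WB (rQ P) ⟨UpS (· ≤ ·) (F : Set P), F, rfl⟩ B :=
          (hch _ F rfl).mpr hF
        have := hlubW.1 _ hFW
        exact this ⟨x', by simp, hxy⟩
      · intro y hy
        set u : {S : Set P // ∃ F : Finset P, S = UpS (· ≤ ·) (F : Set P)} :=
          ⟨UpS (· ≤ ·) ((({y} : Finset P)) : Set P), {y}, rfl⟩ with hu
        have h1 : ∀ A, WB (rQ P) A B → rQ P A u := by
          intro A hA
          rintro z ⟨y', hy', hyz⟩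
          simp only [Finset.coe_singleton, Set.mem_singleton_iff] at hy'
          subst hy'
          obtain ⟨F, hAF⟩ := A.2
          have hyF : y' ∈ UpS (· ≤ ·) (F : Set P) :=
            Set.mem_iInter₂.mp hy F ((hch A F hAF).mp hA)
          show z ∈ A.1
          rw [hAF]
          exact UpS_upward hyF hyz
        have h2 := hlubW.2 u h1
        have hyu : y ∈ u.1 := ⟨y, by simp, le_rfl⟩
        obtain ⟨x', hx', hl⟩ := h2 hyu
        simp only [Finset.coe_singleton, Set.mem_singleton_iff] at hx'
        subst hx'
        exact ⟨x', rfl, hl⟩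
end
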